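/- arXiv:1803.07425 — 8 statements merged into one kernel-verified Lean document; each statement's English description precedes it below -/
import Mathlib

section
/- Let n ≥ 2 be an integer, λ > 1/(n-1), μ > 0, and let r : ℝ → ℝ be a twice continuously differentiable function with r(y) > 0 and r(y) > y·r'(y) for all y ∈ ℝ, r(0) = μ, r'(0) = 0, solving r''(y)/(1 + r'(y)²) = (n-1)/r(y) − (1 + r'(y)²)/(λ(r(y) − y·r'(y))) for all y ∈ ℝ. Then r'(y) > 0 for all y > 0. -/
open Set


/-- Monotonicity: the solution of the inverse mean curvature flow soliton ODE
with `λ > 1/(n-1)` is strictly increasing on `(0, ∞)`. -/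
theorem deriv_pos_of_solution (n : ℕ) (hn : 2 ≤ n) (lam : ℝ)
    (hlam : 1 / ((n : ℝ) - 1) < lam) (mu : ℝ) (hmu : 0 < mu)
    (r : ℝ → ℝ) (hC : ContDiff ℝ 2 r)
    (hpos : ∀ y : ℝ, 0 < r y)
    (hstruct : ∀ y : ℝ, y * deriv r y < r y)
    (hr0 : r 0 = mu) (hr'0 : deriv r 0 = 0)
    (hode : ∀ y : ℝ,
      deriv (deriv r) y / (1 + (deriv r y) ^ 2) =
        ((n : ℝ) - 1) / r y -
          (1 + (deriv r y) ^ 2) / (lam * (r y - y * deriv r y))) :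
    ∀ y : ℝ, 0 < y → 0 < deriv r y := by
  have hn1 : (1:ℝ) ≤ (n:ℝ) - 1 := by
    have : (2:ℝ) ≤ (n:ℝ) := by exact_mod_cast hn
    linarith
  have hlam0 : 0 < lam := lt_trans (by positivity) hlam
  have hlamn : 1 < lam * ((n:ℝ) - 1) := by
    rw [div_lt_iff₀ (by linarith)] at hlam
    linarith
  have hC1 : ContDiff ℝ 1 (deriv r) :=
    (contDiff_succ_iff_deriv.mp (show ContDiff ℝ ((1:ℕ)+1) r from by exact_mod_cast hC)).2.2
  have hdr' : Differentiable ℝ (deriv r) := hC1.differentiable one_ne_zero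
  have hcont' : Continuous (deriv r) := hdr'.continuous
  have hcont'' : Continuous (deriv (deriv r)) := hC1.continuous_deriv le_rfl
  -- key: at a zero of r', r'' > 0
  have key : ∀ z : ℝ, deriv r z = 0 → 0 < deriv (deriv r) z := by
    intro z hz
    have h := hode z
    rw [hz] at h
    have hrz := hpos z
    simp at h
    rw [h, sub_pos]
    have h1 : (0:ℝ) < (r z)⁻¹ := by positivity
    have h2 : (0:ℝ) < lam⁻¹ := by positivity
    have h3 : lam⁻¹ < (n:ℝ) - 1 := by
      rw [inv_lt_iff_one_lt_mul₀ hlam0]; linarith [hlamn]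
    calc (r z)⁻¹ * lam⁻¹ < (r z)⁻¹ * ((n:ℝ)-1) := by
            exact mul_lt_mul_of_pos_left h3 h1
      _ = ((n:ℝ)-1) / r z := by rw [mul_comm, div_eq_mul_inv]
  -- local strict monotonicity of r' around its zeros
  have loc : ∀ z : ℝ, deriv r z = 0 →
      ∃ δ > 0, StrictMonoOn (deriv r) (Icc (z - δ) (z + δ)) := by
    intro z hz
    have hzpos := key z hz
    have hopen : IsOpen {x | 0 < deriv (deriv r) x} := isOpen_lt continuous_const hcont''
    obtain ⟨δ, hδ, hball⟩ := Metric.mem_nhds_iff.mp (hopen.mem_nhds hzpos)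
    refine ⟨δ/2, by positivity, ?_⟩
    apply strictMonoOn_of_deriv_pos (convex_Icc _ _) hcont'.continuousOn
    intro x hx
    rw [interior_Icc] at hx
    apply hball
    rw [Metric.mem_ball, Real.dist_eq, abs_lt]
    constructor
    · linarith [hx.1]
    · linarith [hx.2]
  -- r' is never negative on (0, ∞)
  have nonneg : ∀ y : ℝ, 0 < y → ¬ deriv r y < 0 := by
    intro y hy hneg
    have hAcomp : IsCompact (Icc (0:ℝ) y ∩ {x | deriv r x = 0}) :=
      isCompact_Icc.inter_right (isClosed_eq hcont' continuous_const)
    have hAne : (Icc (0:ℝ) y ∩ {x | deriv r x = 0}).Nonempty :=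
      ⟨0, ⟨le_rfl, hy.le⟩, hr'0⟩
    obtain ⟨⟨ht0, hty⟩, htz⟩ := hAcomp.sSup_mem hAne
    set t := sSup (Icc (0:ℝ) y ∩ {x | deriv r x = 0}) with ht
    have hty' : t < y := by
      rcases lt_or_eq_of_le hty with h | h
      · exact h
      · rw [h] at htz; exact absurd htz (ne_of_lt hneg)
    obtain ⟨δ, hδ, hmono⟩ := loc t htz
    set s := min (t + δ) y with hs
    have hts : t < s := lt_min (by linarith) hty'
    have hsy : s ≤ y := min_le_right _ _
    have hsmem : s ∈ Icc (t - δ) (t + δ) := ⟨by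
      have := min_le_left (t + δ) y; linarith, min_le_left _ _⟩
    have hrs : 0 < deriv r s := by
      have := hmono ⟨by linarith, by linarith⟩ hsmem hts
      rwa [htz] at this
    -- IVT on [s, y]: r' s > 0 > r' y gives a zero c in (t, y], contradicting sup
    have hiv := intermediate_value_Icc' hsy hcont'.continuousOn
    have h0 : (0:ℝ) ∈ Icc (deriv r y) (deriv r s) := ⟨hneg.le, hrs.le⟩
    obtain ⟨c, ⟨hcs, hcy⟩, hc0⟩ := hiv h0
    have hcA : c ∈ Icc (0:ℝ) y ∩ {x | deriv r x = 0} :=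
      ⟨⟨by linarith, hcy⟩, hc0⟩
    have : c ≤ t := le_csSup hAcomp.bddAbove hcA
    linarith
  -- r' is never zero on (0, ∞)
  have nozero : ∀ y : ℝ, 0 < y → deriv r y ≠ 0 := by
    intro y hy hz
    obtain ⟨δ, hδ, hmono⟩ := loc y hz
    set s := max (y - δ) (y/2) with hs
    have hs1 : 0 < s := lt_max_of_lt_right (by linarith)
    have hs2 : s < y := max_lt (by linarith) (by linarith)
    have hsmem : s ∈ Icc (y - δ) (y + δ) := ⟨le_max_left _ _, by linarith⟩
    have := hmono hsmem ⟨by linarith, by linarith⟩ hs2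
    rw [hz] at this
    exact nonneg s hs1 this
  intro y hy
  rcases lt_trichotomy (deriv r y) 0 with h | h | h
  · exact absurd h (nonneg y hy)
  · exact absurd h (nozero y hy)
  · exact h
end

section
/- Let n ≥ 2 be an integer, λ > 1/(n-1), μ > 0, and let r : ℝ → ℝ be a twice continuously differentiable function with r(y) > 0 and r(y) > y·r'(y) for all y ∈ ℝ, r(0) = μ, r'(0) = 0, solving r''(y)/(1 + r'(y)²) = (n-1)/r(y) − (1 + r'(y)²)/(λ(r(y) − y·r'(y))) for all y ∈ ℝ. Then the limit a₁ := lim_{y→∞} r'(y) exists and satisfies 0 ≤ a₁ < ∞. -/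
open Filter Topology

/-- The derivative of the solution of the inverse mean curvature flow soliton
ODE has a finite nonnegative limit at infinity. -/
theorem deriv_tendsto_finite_limit (n : ℕ) (hn : 2 ≤ n) (lam : ℝ)
    (hlam : 1 / ((n : ℝ) - 1) < lam) (mu : ℝ) (hmu : 0 < mu)
    (r : ℝ → ℝ) (hC : ContDiff ℝ 2 r)
    (hpos : ∀ y : ℝ, 0 < r y)
    (hstruct : ∀ y : ℝ, y * deriv r y < r y)
    (hr0 : r 0 = mu) (hr'0 : deriv r 0 = 0)
    (hode : ∀ y : ℝ,
      deriv (deriv r) y / (1 + (deriv r y) ^ 2) =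
        ((n : ℝ) - 1) / r y -
          (1 + (deriv r y) ^ 2) / (lam * (r y - y * deriv r y))) :
    ∃ a₁ : ℝ, 0 ≤ a₁ ∧ Tendsto (deriv r) atTop (nhds a₁) := by
  set p : ℝ → ℝ := deriv r with hp_def
  set q : ℝ → ℝ := deriv p with hq_def
  set c : ℝ := ((n : ℝ) - 1) * lam with hc_def
  have h2 : (2 : ℝ) ≤ n := by exact_mod_cast hn
  have hn1 : (0 : ℝ) < (n : ℝ) - 1 := by linarith
  have hl0 : 0 < lam := lt_of_le_of_lt (by positivity) hlam
  have hc1 : 1 < c := by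
    rw [div_lt_iff₀ hn1] at hlam
    nlinarith
  -- regularity
  have h2' : ContDiff ℝ ((1 : ℕ∞) + 1) r := by exact_mod_cast hC
  have hd : Differentiable ℝ r := (contDiff_succ_iff_deriv.mp h2').1
  have hp1 : ContDiff ℝ 1 p := (contDiff_succ_iff_deriv.mp h2').2.2
  have hpc : Continuous p := hp1.continuous
  have hpd : Differentiable ℝ p := hp1.differentiable one_ne_zero
  have hqc : Continuous q := hq_def ▸ hp1.continuous_deriv le_rfl
  have hrD : ∀ y, HasDerivAt r (p y) y := fun y => (hd y).hasDerivAt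
  have hpD : ∀ y, HasDerivAt p (q y) y := fun y => hq_def ▸ (hpd y).hasDerivAt
  have hDpos : ∀ y, 0 < r y - y * p y := fun y => sub_pos.mpr (hstruct y)
  set F : ℝ → ℝ := fun y => c * (r y - y * p y) - r y * (1 + p y ^ 2) with hF_def
  have hFc : Continuous F := by
    apply Continuous.sub
    · exact continuous_const.mul ((hd.continuous).sub (continuous_id.mul hpc))
    · exact (hd.continuous).mul (continuous_const.add (hpc.pow 2))
  -- the key identity relating q and F
  have key : ∀ y, q y * (lam * r y * (r y - y * p y)) = (1 + p y ^ 2) * F y := by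
    intro y
    have h := hode y
    have e1 : (0 : ℝ) < 1 + p y ^ 2 := by positivity
    have e2 := hpos y
    have e3 := hDpos y
    have e4 : r y - p y * y ≠ 0 := by rw [mul_comm]; exact e3.ne'
    field_simp at h
    simp only [hF_def]
    linear_combination h
  have hqpos : ∀ y, 0 < F y → 0 < q y := by
    intro y hF
    have e1 : (0 : ℝ) < 1 + p y ^ 2 := by positivity
    have hA : 0 < lam * r y * (r y - y * p y) := mul_pos (mul_pos hl0 (hpos y)) (hDpos y)
    nlinarith [key y, mul_pos e1 hF]
  have hqnonpos : ∀ y, F y ≤ 0 → q y ≤ 0 := by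
    intro y hF
    have e1 : (0 : ℝ) < 1 + p y ^ 2 := by positivity
    have hA : 0 < lam * r y * (r y - y * p y) := mul_pos (mul_pos hl0 (hpos y)) (hDpos y)
    nlinarith [key y, mul_nonpos_of_nonneg_of_nonpos e1.le hF]
  have hqzero : ∀ y, F y = 0 → q y = 0 := by
    intro y hF
    have hA : 0 < lam * r y * (r y - y * p y) := mul_pos (mul_pos hl0 (hpos y)) (hDpos y)
    have := key y
    rw [hF, mul_zero] at this
    exact (mul_eq_zero.mp this).resolve_right (ne_of_gt hA)
  have hFp0 : ∀ y, p y = 0 → 0 < F y := by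
    intro y h
    have : F y = r y * (c - 1) := by simp only [hF_def]; rw [h]; ring
    rw [this]
    exact mul_pos (hpos y) (by linarith)
  have hF0 : 0 < F 0 := hFp0 0 hr'0
  -- derivative of F at points where F vanishes
  have hFderiv : ∀ z, F z = 0 → HasDerivAt F (-(p z) * (1 + p z ^ 2)) z := by
    intro z hFz
    have hqz : q z = 0 := hqzero z hFz
    have h1 := (((hrD z).sub ((hasDerivAt_id z).mul (hpD z))).const_mul c).sub
      ((hrD z).mul ((hasDerivAt_const z (1 : ℝ)).add ((hpD z).pow 2)))
    refine h1.congr_deriv ?_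
    simp only [hqz, Pi.add_apply, Pi.pow_apply, id, mul_zero, add_zero]; ring
  -- positivity of p on (0, ∞)
  have hPpos : ∀ y, 0 < y → 0 < p y := by
    intro Y hY
    by_contra h
    push_neg at h
    have hq0 : 0 < q 0 := hqpos 0 hF0
    have hopen : IsOpen {t : ℝ | 0 < q t} := isOpen_lt continuous_const hqc
    obtain ⟨ε, hε, hball⟩ := Metric.mem_nhds_iff.mp (hopen.mem_nhds hq0)
    set e := min (ε / 2) Y with he_def
    have he0 : 0 < e := lt_min (by linarith) hY
    have heY : e ≤ Y := min_le_right _ _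
    have hqe : ∀ t ∈ Set.Icc (0 : ℝ) e, 0 < q t := by
      intro t ht
      apply hball
      rw [Metric.mem_ball, Real.dist_0_eq_abs, abs_of_nonneg ht.1]
      calc t ≤ e := ht.2
        _ ≤ ε / 2 := min_le_left _ _
        _ < ε := by linarith
    have hsm : StrictMonoOn p (Set.Icc 0 e) := by
      apply strictMonoOn_of_deriv_pos (convex_Icc 0 e) hpc.continuousOn
      intro t ht
      rw [interior_Icc] at ht
      rw [← hq_def]
      exact hqe t ⟨ht.1.le, ht.2.le⟩
    have hpe : 0 < p e := by
      have := hsm ⟨le_rfl, he0.le⟩ ⟨he0.le, le_rfl⟩ he0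
      rwa [hr'0] at this
    rcases eq_or_lt_of_le heY with heq | hlt
    · exact absurd (heq ▸ hpe) (not_lt.mpr h)
    · set S := Set.Icc e Y ∩ {t : ℝ | p t ≤ 0} with hS_def
      have hSc : IsClosed S := isClosed_Icc.inter (isClosed_le hpc continuous_const)
      have hSne : S.Nonempty := ⟨Y, ⟨heY, le_rfl⟩, h⟩
      have hSbdd : BddBelow S := ⟨e, fun t ht => ht.1.1⟩
      set z := sInf S with hz_def
      have hzS : z ∈ S := hSc.csInf_mem hSne hSbdd
      have hez : e < z := by
        rcases eq_or_lt_of_le (le_csInf hSne fun t ht => ht.1.1) with heq2 | hlt2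
        · exact absurd (heq2 ▸ hpe) (not_lt.mpr hzS.2)
        · exact hlt2
      have hbefore : ∀ t, e ≤ t → t < z → 0 < p t := by
        intro t h1 h2
        by_contra hh
        push_neg at hh
        exact absurd (csInf_le hSbdd ⟨⟨h1, le_trans h2.le hzS.1.2⟩, hh⟩) (not_le.mpr h2)
      have hpz : p z = 0 := by
        have hzp : p z ≤ 0 := hzS.2
        rcases lt_or_eq_of_le hzp with h0 | h0
        · exfalso
          have hsub := intermediate_value_Icc' hez.le hpc.continuousOn
          have h0mem : (0 : ℝ) ∈ Set.Icc (p z) (p e) := ⟨h0.le, hpe.le⟩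
          obtain ⟨t, htm, ht0⟩ := hsub h0mem
          have htz : t < z := lt_of_le_of_ne htm.2 (fun hh => by rw [hh] at ht0; linarith)
          exact absurd ht0 (ne_of_gt (hbefore t htm.1 htz))
        · exact h0
      have hqz : 0 < q z := hqpos z (hFp0 z hpz)
      have htend : Tendsto (slope p z) (𝓝[<] z) (𝓝 (q z)) :=
        (hasDerivAt_iff_tendsto_slope.mp (hpD z)).mono_left
          (nhdsWithin_mono _ fun t ht => ne_of_lt ht)
      have hev : ∀ᶠ t in 𝓝[<] z, slope p z t ≤ 0 := by
        filter_upwards [Ioo_mem_nhdsLT_of_mem (Set.mem_Ioc.mpr ⟨hez, le_rfl⟩)] with t ht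
        rw [slope_def_field, hpz, sub_zero]
        exact div_nonpos_of_nonneg_of_nonpos (hbefore t ht.1.le ht.2).le
          (sub_nonpos.mpr ht.2.le)
      have : q z ≤ 0 := le_of_tendsto htend hev
      linarith
  -- once F is nonpositive, it stays nonpositive
  have hFstay : ∀ y₀, 0 < y₀ → F y₀ ≤ 0 → ∀ y, y₀ ≤ y → F y ≤ 0 := by
    intro y₀ hy₀ hFy₀ Y hY
    by_contra hFY
    push_neg at hFY
    set S := Set.Icc y₀ Y ∩ {t : ℝ | F t ≤ 0} with hS_def
    have hSc : IsClosed S := isClosed_Icc.inter (isClosed_le hFc continuous_const)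
    have hSne : S.Nonempty := ⟨y₀, ⟨le_rfl, hY⟩, hFy₀⟩
    have hSbdd : BddAbove S := ⟨Y, fun t ht => ht.1.2⟩
    set z := sSup S with hz_def
    have hzS : z ∈ S := hSc.csSup_mem hSne hSbdd
    have hzY : z < Y :=
      lt_of_le_of_ne hzS.1.2 (fun hh => absurd (hh ▸ hzS.2) (not_le.mpr hFY))
    have hafter : ∀ t, z < t → t ≤ Y → 0 < F t := by
      intro t ht1 ht2
      by_contra hh
      push_neg at hh
      exact absurd (le_csSup hSbdd ⟨⟨le_trans hzS.1.1 ht1.le, ht2⟩, hh⟩)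
        (not_le.mpr ht1)
    have hFz : F z = 0 := by
      have hzF : F z ≤ 0 := hzS.2
      rcases lt_or_eq_of_le hzF with h0 | h0
      · exfalso
        have hsub := intermediate_value_Icc hzY.le hFc.continuousOn
        have h0mem : (0 : ℝ) ∈ Set.Icc (F z) (F Y) := ⟨h0.le, hFY.le⟩
        obtain ⟨t, htm, ht0⟩ := hsub h0mem
        have htz : z < t := lt_of_le_of_ne htm.1 (fun hh => by rw [← hh] at ht0; linarith)
        exact absurd ht0 (ne_of_gt (hafter t htz htm.2))
      · exact h0
    have hz0 : 0 < z := lt_of_lt_of_le hy₀ hzS.1.1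
    have hpz : 0 < p z := hPpos z hz0
    have hF' := hFderiv z hFz
    have htend : Tendsto (slope F z) (𝓝[>] z) (𝓝 (-(p z) * (1 + p z ^ 2))) :=
      (hasDerivAt_iff_tendsto_slope.mp hF').mono_left
        (nhdsWithin_mono _ fun t ht => ne_of_gt ht)
    have hev : ∀ᶠ t in 𝓝[>] z, 0 ≤ slope F z t := by
      filter_upwards [Ioo_mem_nhdsGT_of_mem (Set.mem_Ico.mpr ⟨le_rfl, hzY⟩)] with t ht
      rw [slope_def_field, hFz, sub_zero]
      exact div_nonneg (hafter t ht.1 ht.2.le).le (sub_nonneg.mpr ht.1.le)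
    have : 0 ≤ -(p z) * (1 + p z ^ 2) := ge_of_tendsto htend hev
    nlinarith [sq_nonneg (p z)]
  -- dichotomy
  by_cases hA : ∀ y, 0 ≤ y → 0 < F y
  · -- F always positive: p is monotone and bounded on [0, ∞)
    have hpmono : MonotoneOn p (Set.Ici 0) := by
      apply monotoneOn_of_deriv_nonneg (convex_Ici 0) hpc.continuousOn
        (hpd.differentiableOn)
      intro t ht
      rw [interior_Ici] at ht
      rw [← hq_def]
      exact (hqpos t (hA t ht.le)).le
    have hbound : ∀ y, 0 ≤ y → p y ≤ Real.sqrt (c - 1) := by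
      intro y hy
      have hFy := hA y hy
      have hpy : 0 ≤ p y := by
        rcases eq_or_lt_of_le hy with hh | hh
        · rw [← hh, hr'0]
        · exact (hPpos y hh).le
      have h1 : r y * (1 + p y ^ 2) < c * (r y - y * p y) := by
        simp only [hF_def] at hFy; linarith
      have h2 : r y - y * p y ≤ r y := by nlinarith [mul_nonneg hy hpy]
      have h3 : 1 + p y ^ 2 < c := by
        have hcr : c * (r y - y * p y) ≤ c * r y :=
          mul_le_mul_of_nonneg_left h2 (by linarith)
        nlinarith [hpos y]
      rw [show p y = ((p y ^ 2).sqrt) from (Real.sqrt_sq hpy).symm]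
      exact Real.sqrt_le_sqrt (by linarith)
    set P : ℝ → ℝ := fun y => p (max y 0) with hP_def
    have hPm : Monotone P := fun a b hab =>
      hpmono (Set.mem_Ici.mpr (le_max_right a 0)) (Set.mem_Ici.mpr (le_max_right b 0))
        (max_le_max hab le_rfl)
    have hPbdd : BddAbove (Set.range P) := by
      refine ⟨Real.sqrt (c - 1), ?_⟩
      rintro x ⟨y, rfl⟩
      exact hbound _ (le_max_right y 0)
    have htend := tendsto_atTop_ciSup hPm hPbdd
    refine ⟨⨆ y, P y, ?_, ?_⟩
    · have hle : P 0 ≤ ⨆ y, P y := le_ciSup hPbdd 0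
      have hP0 : P 0 = 0 := by simp only [hP_def, max_self]; exact hr'0
      linarith
    · apply htend.congr'
      filter_upwards [eventually_ge_atTop (0 : ℝ)] with y hy
      simp only [hP_def, max_eq_left hy]
  · -- F becomes nonpositive: p is eventually antitone and nonnegative
    push_neg at hA
    obtain ⟨y₀, hy₀, hFy₀⟩ := hA
    have hy₀pos : 0 < y₀ := by
      rcases eq_or_lt_of_le hy₀ with hh | hh
      · exfalso; rw [← hh] at hFy₀; linarith
      · exact hh
    have hstay := hFstay y₀ hy₀pos hFy₀
    have hpanti : AntitoneOn p (Set.Ici y₀) := by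
      apply antitoneOn_of_deriv_nonpos (convex_Ici y₀) hpc.continuousOn
        (hpd.differentiableOn)
      intro t ht
      rw [interior_Ici] at ht
      rw [← hq_def]
      exact hqnonpos t (hstay t ht.le)
    set P : ℝ → ℝ := fun y => p (max y y₀) with hP_def
    have hPa : Antitone P := fun a b hab =>
      hpanti (Set.mem_Ici.mpr (le_max_right a y₀)) (Set.mem_Ici.mpr (le_max_right b y₀))
        (max_le_max hab le_rfl)
    have hPlb : ∀ y, 0 < P y := fun y =>
      hPpos _ (lt_of_lt_of_le hy₀pos (le_max_right y y₀))
    have hPbdd : BddBelow (Set.range P) := by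
      refine ⟨0, ?_⟩
      rintro x ⟨y, rfl⟩
      exact (hPlb y).le
    have htend := tendsto_atTop_ciInf hPa hPbdd
    refine ⟨⨅ y, P y, le_ciInf fun y => (hPlb y).le, ?_⟩
    apply htend.congr'
    filter_upwards [eventually_ge_atTop y₀] with y hy
    simp only [hP_def, max_eq_left hy]
end

section
/- Let n ≥ 2 be an integer, λ > 1/(n-1), μ > 0, and let r : ℝ → ℝ be a twice continuously differentiable even function with r(y) > 0 and r(y) > y·r'(y) for all y ∈ ℝ, r(0) = μ, r'(0) = 0, solving r''(y)/(1 + r'(y)²) = (n-1)/r(y) − (1 + r'(y)²)/(λ(r(y) − y·r'(y))) for all y ∈ ℝ. Then r(y) → ∞ as y → ∞ and as y → −∞. -/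
open Filter Set

set_option maxHeartbeats 1000000

private lemma ev_pos_right' {g : ℝ → ℝ} {x d : ℝ} (hg : HasDerivAt g d x) (h0 : g x = 0)
    (hd : 0 < d) : ∀ᶠ y in nhdsWithin x (Ioi x), 0 < g y := by
  have hs := hasDerivAt_iff_tendsto_slope.mp hg
  have h1 : ∀ᶠ y in nhdsWithin x {x}ᶜ, 0 < slope g x y := hs (Ioi_mem_nhds hd)
  have h2 : ∀ᶠ y in nhdsWithin x (Ioi x), 0 < slope g x y :=
    h1.filter_mono (nhdsWithin_mono x (fun y hy => ne_of_gt hy))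
  filter_upwards [h2, self_mem_nhdsWithin] with y hy hy'
  rw [slope_def_field] at hy
  have hxy : (0:ℝ) < y - x := sub_pos.mpr hy'
  simp only [h0, sub_zero] at hy
  rcases div_pos_iff.mp hy with ⟨h, _⟩ | ⟨_, h⟩
  · exact h
  · linarith

private lemma ev_neg_left' {g : ℝ → ℝ} {x d : ℝ} (hg : HasDerivAt g d x) (h0 : g x = 0)
    (hd : 0 < d) : ∀ᶠ y in nhdsWithin x (Iio x), g y < 0 := by
  have hs := hasDerivAt_iff_tendsto_slope.mp hg
  have h1 : ∀ᶠ y in nhdsWithin x {x}ᶜ, 0 < slope g x y := hs (Ioi_mem_nhds hd)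
  have h2 : ∀ᶠ y in nhdsWithin x (Iio x), 0 < slope g x y :=
    h1.filter_mono (nhdsWithin_mono x (fun y hy => ne_of_lt hy))
  filter_upwards [h2, self_mem_nhdsWithin] with y hy hy'
  rw [slope_def_field] at hy
  have hxy : y - x < 0 := sub_neg.mpr hy'
  simp only [h0, sub_zero] at hy
  rcases div_pos_iff.mp hy with ⟨_, h⟩ | ⟨h, _⟩
  · linarith
  · exact h

/-- The even solution of the inverse mean curvature flow soliton ODE tends
to infinity as `y → ±∞`. -/
theorem tendsto_atTop_of_solution (n : ℕ) (hn : 2 ≤ n) (lam : ℝ)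
    (hlam : 1 / ((n : ℝ) - 1) < lam) (mu : ℝ) (hmu : 0 < mu)
    (r : ℝ → ℝ) (hC : ContDiff ℝ 2 r)
    (heven : ∀ y : ℝ, r (-y) = r y)
    (hpos : ∀ y : ℝ, 0 < r y)
    (hstruct : ∀ y : ℝ, y * deriv r y < r y)
    (hr0 : r 0 = mu) (hr'0 : deriv r 0 = 0)
    (hode : ∀ y : ℝ,
      deriv (deriv r) y / (1 + (deriv r y) ^ 2) =
        ((n : ℝ) - 1) / r y -
          (1 + (deriv r y) ^ 2) / (lam * (r y - y * deriv r y))) :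
    Tendsto r atTop atTop ∧ Tendsto r atBot atTop := by
  set A : ℝ := (n : ℝ) - 1 with hAdef
  have hA1 : (1:ℝ) ≤ A := by
    have : (2:ℝ) ≤ (n:ℝ) := by exact_mod_cast hn
    simp only [hAdef]; linarith
  have hA0 : (0:ℝ) < A := by linarith
  have hlam0 : 0 < lam := lt_trans (by positivity) hlam
  have hlamA : 1 < lam * A := by
    rw [div_lt_iff₀ hA0] at hlam; linarith
  have hdr : Differentiable ℝ r := hC.differentiable (by norm_num)
  have hC2 : ContDiff ℝ ((1:ℕ) + 1) r := by exact_mod_cast hC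
  have hd2 : ContDiff ℝ 1 (deriv r) := (contDiff_succ_iff_deriv.mp hC2).2.2
  have hdr' : Differentiable ℝ (deriv r) := hd2.differentiable (by norm_num)
  have hcont' : Continuous (deriv r) := hdr'.continuous
  -- the second derivative is positive at every critical point
  have hOdeZero : ∀ y : ℝ, deriv r y = 0 → 0 < deriv (deriv r) y := by
    intro y hy
    have h := hode y
    rw [hy] at h
    simp only [mul_zero, sub_zero] at h
    have hry := hpos y
    have hd : 0 < lam * r y := by positivity
    norm_num at h
    rw [h, sub_pos, div_eq_mul_inv]
    have h1 : (r y)⁻¹ > 0 := by positivity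
    have h2 : lam⁻¹ < A := by
      rw [inv_lt_iff_one_lt_mul₀ hlam0]; linarith [hlamA]
    calc (r y)⁻¹ * lam⁻¹ < (r y)⁻¹ * A := by nlinarith
      _ = A * (r y)⁻¹ := by ring
  -- the derivative is positive on (0, ∞)
  have hrpos' : ∀ y : ℝ, 0 < y → 0 < deriv r y := by
    have caseA : ∀ y1 : ℝ, 0 < y1 → deriv r y1 < 0 → False := by
      intro y1 hy1 hneg
      set K : Set ℝ := Icc 0 y1 ∩ (deriv r) ⁻¹' {0} with hK
      have hKc : IsClosed K := (isClosed_Icc).inter (isClosed_singleton.preimage hcont')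
      have hKcpt : IsCompact K := isCompact_Icc.of_isClosed_subset hKc inter_subset_left
      have h0K : (0:ℝ) ∈ K := ⟨⟨le_refl 0, le_of_lt hy1⟩, by simpa using hr'0⟩
      set y0 := sSup K with hy0def
      have hy0K : y0 ∈ K := hKcpt.sSup_mem ⟨0, h0K⟩
      have hy0 : deriv r y0 = 0 := hy0K.2
      have hy0ge : 0 ≤ y0 := hy0K.1.1
      have hy0lt : y0 < y1 := lt_of_le_of_ne hy0K.1.2
        (fun h => by rw [← h, hy0] at hneg; exact lt_irrefl 0 hneg)
      have hev := ev_pos_right' (hdr' y0).hasDerivAt hy0 (hOdeZero y0 hy0)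
      have hIoo : Ioo y0 y1 ∈ nhdsWithin y0 (Ioi y0) :=
        Ioo_mem_nhdsGT_of_mem ⟨le_refl y0, hy0lt⟩
      obtain ⟨z, hz1, hz2⟩ := (hev.and (eventually_of_mem hIoo (fun _ h => h))).exists
      have hzy1 : z ≤ y1 := le_of_lt hz2.2
      have hmem : (0:ℝ) ∈ Icc (deriv r y1) (deriv r z) := ⟨le_of_lt hneg, le_of_lt hz1⟩
      obtain ⟨w, hw1, hw2⟩ := intermediate_value_Icc' hzy1 (hcont'.continuousOn) hmem
      have hwK : w ∈ K := ⟨⟨le_trans (le_trans hy0ge (le_of_lt hz2.1)) hw1.1, hw1.2⟩, hw2⟩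
      have h1 : w ≤ y0 := le_csSup hKcpt.bddAbove hwK
      have h2 : y0 < w := lt_of_lt_of_le hz2.1 hw1.1
      linarith
    intro y hy
    by_contra hcon
    push_neg at hcon
    rcases hcon.lt_or_eq with hlt | heq
    · exact caseA y hy hlt
    · have hev := ev_neg_left' (hdr' y).hasDerivAt heq (hOdeZero y heq)
      have hIoo : Ioo 0 y ∈ nhdsWithin y (Iio y) := Ioo_mem_nhdsLT_of_mem ⟨hy, le_refl y⟩
      obtain ⟨z, hz1, hz2⟩ := (hev.and (eventually_of_mem hIoo (fun _ h => h))).exists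
      exact caseA z hz2.1 hz1
  have hsm : StrictMonoOn r (Ici 0) := by
    apply strictMonoOn_of_deriv_pos (convex_Ici 0) hC.continuous.continuousOn
    intro x hx
    rw [interior_Ici] at hx
    exact hrpos' x hx
  have hmono : MonotoneOn r (Ici 0) := hsm.monotoneOn
  -- the auxiliary function h = r - y r'
  set H : ℝ → ℝ := fun y => r y - y * deriv r y with hHdef
  have hHpos : ∀ y, 0 < H y := fun y => sub_pos.mpr (hstruct y)
  have hHderiv : ∀ y : ℝ, HasDerivAt H (-(y * deriv (deriv r) y)) y := by
    intro y
    have h2 : HasDerivAt (fun y : ℝ => y * deriv r y)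
        (1 * deriv r y + y * deriv (deriv r) y) y :=
      (hasDerivAt_id y).mul (hdr' y).hasDerivAt
    have := (hdr y).hasDerivAt.sub h2
    exact this.congr_deriv (by ring)
  have hHcont : Continuous H := by
    exact (hC.continuous).sub (continuous_id.mul hcont')
  -- main claim: r is unbounded on [0, ∞)
  have key : ∀ b : ℝ, ∃ x : ℝ, 0 ≤ x ∧ b ≤ r x := by
    by_contra hcon
    push_neg at hcon
    obtain ⟨b, hb⟩ := hcon
    have hbdd : BddAbove (r '' Ici 0) := by
      refine ⟨b, fun v hv => ?_⟩
      obtain ⟨x, hx, rfl⟩ := hv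
      exact (hb x hx).le
    have hne : (r '' Ici 0).Nonempty := ⟨r 0, 0, self_mem_Ici, rfl⟩
    set L : ℝ := sSup (r '' Ici 0) with hLdef
    have hrL : ∀ x : ℝ, 0 ≤ x → r x ≤ L := fun x hx => le_csSup hbdd ⟨x, hx, rfl⟩
    have hmuL : mu ≤ L := hr0 ▸ hrL 0 (le_refl 0)
    have hL0 : 0 < L := lt_of_lt_of_le hmu hmuL
    -- constants
    set β : ℝ := 1 / (lam * A) with hβdef
    have hβ0 : 0 < β := by positivity
    have hβ1 : β < 1 := by rw [hβdef, div_lt_one (by positivity)]; exact hlamA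
    set ε : ℝ := min 1 ((1/β - 1)/4) with hεdef
    have hε0 : 0 < ε := by
      apply lt_min one_pos
      have : 1 < 1/β := (one_lt_div hβ0).mpr hβ1
      linarith
    have hε1 : ε ≤ 1 := min_le_left _ _
    have hε2 : (1+ε)^2 * β < 1 := by
      have h4 : ε ≤ (1/β - 1)/4 := min_le_right _ _
      have hinv : (1/β) * β = 1 := one_div_mul_cancel (ne_of_gt hβ0)
      have h5 : ε * β ≤ (1 - β)/4 := by
        nlinarith [mul_le_mul_of_nonneg_right h4 hβ0.le]
      nlinarith [h5, mul_le_mul_of_nonneg_right hε1 (mul_nonneg hε0.le hβ0.le)]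
    set C' : ℝ := (1+ε)^2 * L * β with hC'def
    have hC'0 : 0 < C' := by positivity
    have hC'L : C' < L := by
      calc C' = ((1+ε)^2 * β) * L := by ring
        _ < 1 * L := by nlinarith
        _ = L := one_mul L
    set κ : ℝ := A * ε / ((1+ε) * L) with hκdef
    have hκ0 : 0 < κ := by positivity
    set Y : ℝ := max 1 (L / Real.sqrt ε) with hYdef
    have hY1 : (1:ℝ) ≤ Y := le_max_left _ _
    have hY0 : (0:ℝ) < Y := lt_of_lt_of_le one_pos hY1
    -- derivative bounds for y ≥ Y
    have hslope : ∀ y : ℝ, Y ≤ y → (deriv r y)^2 ≤ ε := by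
      intro y hy
      have hy0 : (0:ℝ) < y := lt_of_lt_of_le hY0 hy
      have hp0 : 0 < deriv r y := hrpos' y hy0
      have h1 : y * deriv r y ≤ L := le_trans (hstruct y).le (hrL y hy0.le)
      have hsq : 0 < Real.sqrt ε := Real.sqrt_pos.mpr hε0
      have h2 : L / Real.sqrt ε ≤ y := le_trans (le_max_right _ _) hy
      have h3 : L ≤ y * Real.sqrt ε := by
        rw [div_le_iff₀ hsq] at h2; linarith
      have h4 : deriv r y ≤ Real.sqrt ε := by
        have : y * deriv r y ≤ y * Real.sqrt ε := le_trans h1 h3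
        exact le_of_mul_le_mul_left this hy0
      calc (deriv r y)^2 ≤ (Real.sqrt ε)^2 := by nlinarith
        _ = ε := Real.sq_sqrt hε0.le
    -- rate estimate
    have hrate : ∀ y : ℝ, Y ≤ y → C' ≤ H y → κ ≤ deriv (deriv r) y := by
      intro y hy hCH
      have hy0 : (0:ℝ) < y := lt_of_lt_of_le hY0 hy
      have hp2 : (deriv r y)^2 ≤ ε := hslope y hy
      have hry : 0 < r y := hpos y
      have hryL : r y ≤ L := hrL y hy0.le
      have hHy : 0 < H y := hHpos y
      have e1 : deriv (deriv r) y =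
          (A / r y - (1 + (deriv r y)^2) / (lam * (H y))) * (1 + (deriv r y)^2) := by
        have h := hode y
        have hne : (0:ℝ) < 1 + (deriv r y)^2 := by positivity
        rw [div_eq_iff (ne_of_gt hne)] at h
        rw [h]
      have b1 : A / L ≤ A / r y := by gcongr
      have b2 : (1 + (deriv r y)^2) / (lam * H y) ≤ (1 + ε) / (lam * C') :=
        div_le_div₀ (by positivity) (by linarith) (by positivity)
          (mul_le_mul_of_nonneg_left hCH hlam0.le)
      have b3 : A / L - (1 + ε) / (lam * C') = κ := by
        rw [hκdef, hC'def, hβdef]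
        field_simp
        ring
      have hbr : κ ≤ A / r y - (1 + (deriv r y)^2) / (lam * H y) := by
        rw [← b3]; linarith
      rw [e1]
      have h1 : (1:ℝ) ≤ 1 + (deriv r y)^2 := by nlinarith [sq_nonneg (deriv r y)]
      nlinarith
    -- there is a point beyond Y where H ≤ C'
    obtain ⟨Y1, hY1ge, hHY1⟩ : ∃ Y1 : ℝ, Y ≤ Y1 ∧ H Y1 ≤ C' := by
      by_contra hcon2
      push_neg at hcon2
      set g : ℝ → ℝ := fun y => H y + (Y * κ) * y with hgdef
      have hganti : AntitoneOn g (Ici Y) := by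
        apply antitoneOn_of_deriv_nonpos (convex_Ici Y)
        · exact (hHcont.add (continuous_const.mul continuous_id)).continuousOn
        · intro x hx
          exact ((hHderiv x).add ((hasDerivAt_id x).const_mul (Y*κ))).differentiableAt.differentiableWithinAt
        · intro x hx
          rw [interior_Ici] at hx
          have hxY : Y ≤ x := le_of_lt hx
          have hd : deriv g x = -(x * deriv (deriv r) x) + (Y*κ) := by
            have := ((hHderiv x).add ((hasDerivAt_id x).const_mul (Y*κ))).deriv
            rw [show g = H + fun y => Y * κ * y from rfl]
            simpa [mul_one] using this
          rw [hd]
          have hr2 : κ ≤ deriv (deriv r) x := hrate x hxY (hcon2 x hxY).le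
          have hx0 : 0 < x := lt_of_lt_of_le hY0 hxY
          have : Y * κ ≤ x * deriv (deriv r) x := by
            apply mul_le_mul hxY hr2 hκ0.le hx0.le
          linarith
      set z : ℝ := Y + (H Y) / (Y * κ) + 1 with hzdef
      have hzY : Y ≤ z := by
        have h9 : 0 < H Y / (Y * κ) := div_pos (hHpos Y) (mul_pos hY0 hκ0)
        rw [hzdef]
        linarith
      have := hganti (self_mem_Ici) hzY hzY
      simp only [hgdef] at this
      have hHz : 0 < H z := hHpos z
      have hexp : (Y * κ) * z = (Y*κ) * Y + H Y + Y*κ := by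
        rw [hzdef]; field_simp
      nlinarith
    have hY10 : 0 < Y1 := lt_of_lt_of_le hY0 hY1ge
    -- barrier: H stays below C' after Y1
    have hbar : ∀ z : ℝ, Y1 ≤ z → H z ≤ C' := by
      intro z hz
      by_contra hcon3
      push_neg at hcon3
      have hzY1 : Y1 < z := by
        rcases eq_or_lt_of_le hz with h | h
        · rw [← h] at hcon3; linarith
        · exact h
      set K : Set ℝ := Icc Y1 z ∩ {y | H y ≤ C'} with hKdef
      have hKc : IsClosed K := isClosed_Icc.inter (isClosed_le hHcont continuous_const)
      have hKcpt : IsCompact K := isCompact_Icc.of_isClosed_subset hKc inter_subset_left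
      have hY1K : Y1 ∈ K := ⟨⟨le_refl _, hz⟩, hHY1⟩
      set w : ℝ := sSup K with hwdef
      have hwK : w ∈ K := hKcpt.sSup_mem ⟨Y1, hY1K⟩
      have hwz : w < z := lt_of_le_of_ne hwK.1.2 (fun h => by
        rw [h] at hwK; exact absurd hwK.2 (not_le.mpr hcon3))
      have hwY1 : Y1 ≤ w := hwK.1.1
      have hmid : ∀ y, y ∈ Ioo w z → C' < H y := by
        intro y hy
        by_contra hy2
        push_neg at hy2
        have hyK : y ∈ K := ⟨⟨le_trans hwY1 hy.1.le, hy.2.le⟩, hy2⟩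
        have : y ≤ w := le_csSup hKcpt.bddAbove hyK
        linarith [hy.1]
      have hanti : StrictAntiOn H (Icc w z) := by
        apply strictAntiOn_of_deriv_neg (convex_Icc w z) hHcont.continuousOn
        intro x hx
        rw [interior_Icc] at hx
        have hxY : Y ≤ x := le_trans hY1ge (le_trans hwY1 hx.1.le)
        have hx0 : 0 < x := lt_of_lt_of_le hY0 hxY
        have hr2 : κ ≤ deriv (deriv r) x := hrate x hxY (hmid x hx).le
        rw [(hHderiv x).deriv]
        have : 0 < x * deriv (deriv r) x := mul_pos hx0 (lt_of_lt_of_le hκ0 hr2)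
        linarith
      have := hanti (left_mem_Icc.mpr hwz.le) (right_mem_Icc.mpr hwz.le) hwz
      have hwC : H w ≤ C' := hwK.2
      linarith
    -- conclusion: r grows at least logarithmically, contradiction
    set m : ℝ := (L - C') / 2 with hmdef
    have hm0 : 0 < m := by rw [hmdef]; linarith
    obtain ⟨v, hv0, hvc⟩ : ∃ v : ℝ, 0 ≤ v ∧ (L + C')/2 < r v := by
      have hlt : (L + C')/2 < L := by linarith
      obtain ⟨u, hu, hul⟩ := exists_lt_of_lt_csSup hne hlt
      obtain ⟨v, hv, rfl⟩ := hu
      exact ⟨v, hv, hul⟩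
    set Y2 : ℝ := max Y1 v with hY2def
    have hY20 : 0 < Y2 := lt_of_lt_of_le hY10 (le_max_left _ _)
    have hstep : ∀ y : ℝ, Y2 ≤ y → m ≤ y * deriv r y := by
      intro y hy
      have hy1 : Y1 ≤ y := le_trans (le_max_left _ _) hy
      have hyv : v ≤ y := le_trans (le_max_right _ _) hy
      have hy0 : (0:ℝ) ≤ y := le_trans hv0 hyv
      have h1 : r v ≤ r y := hmono hv0 hy0 hyv
      have h2 : H y ≤ C' := hbar y hy1
      have : y * deriv r y = r y - H y := by rw [hHdef]; ring
      rw [this]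
      have : (L + C')/2 < r y := lt_of_lt_of_le hvc h1
      rw [hmdef]; linarith
    set g : ℝ → ℝ := fun y => m * Real.log y - r y with hgdef
    have hganti : AntitoneOn g (Ici Y2) := by
      apply antitoneOn_of_deriv_nonpos (convex_Ici Y2)
      · apply ContinuousOn.sub
        · apply ContinuousOn.mul continuousOn_const
          apply Real.continuousOn_log.mono
          intro x hx
          simp only [mem_compl_iff, mem_singleton_iff]
          have : Y2 ≤ x := hx
          intro h; rw [h] at this; linarith
        · exact hC.continuous.continuousOn
      · intro x hx
        rw [interior_Ici] at hx
        have hx0 : 0 < x := lt_trans hY20 hx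
        exact (((Real.hasDerivAt_log (ne_of_gt hx0)).const_mul m).sub (hdr x).hasDerivAt).differentiableAt.differentiableWithinAt
      · intro x hx
        rw [interior_Ici] at hx
        have hx0 : 0 < x := lt_trans hY20 hx
        have hd : deriv g x = m * x⁻¹ - deriv r x :=
          (((Real.hasDerivAt_log (ne_of_gt hx0)).const_mul m).sub (hdr x).hasDerivAt).deriv
        rw [hd]
        have h1 : m ≤ x * deriv r x := hstep x hx.le
        rw [sub_nonpos, mul_inv_le_iff₀ hx0]
        linarith [h1]
    set z : ℝ := Y2 * Real.exp ((L - r Y2)/m + 1) with hzdef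
    have hzY2 : Y2 ≤ z := by
      rw [hzdef]
      nth_rewrite 1 [← mul_one Y2]
      apply mul_le_mul_of_nonneg_left _ hY20.le
      rw [Real.one_le_exp_iff]
      have h8 : r Y2 ≤ L := hrL Y2 hY20.le
      have h9 : 0 ≤ (L - r Y2)/m := div_nonneg (by linarith) hm0.le
      linarith
    have hlogz : Real.log z = Real.log Y2 + ((L - r Y2)/m + 1) := by
      rw [hzdef, Real.log_mul (ne_of_gt hY20) (Real.exp_ne_zero _), Real.log_exp]
    have := hganti self_mem_Ici hzY2 hzY2
    simp only [hgdef] at this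
    rw [hlogz] at this
    have hrzL : r z ≤ L := hrL z (le_trans hY20.le hzY2)
    have : r Y2 + m * ((L - r Y2)/m + 1) ≤ r z := by nlinarith
    have hmm : m * ((L - r Y2)/m + 1) = L - r Y2 + m := by field_simp
    rw [hmm] at this
    linarith
  -- tendsto atTop
  have htop : Tendsto r atTop atTop := by
    rw [tendsto_atTop_atTop]
    intro b
    obtain ⟨x, hx0, hbx⟩ := key b
    exact ⟨x, fun a ha => le_trans hbx (hmono hx0 (le_trans hx0 ha) ha)⟩
  refine ⟨htop, ?_⟩
  have : Tendsto (fun y => r (-y)) atBot atTop := htop.comp tendsto_neg_atBot_atTop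
  have heq : (fun y => r (-y)) = r := funext heven
  rwa [heq] at this
end

section
/- Let n ≥ 2 be an integer, λ > 1/(n-1), μ > 0, and let r : ℝ → ℝ be a twice continuously differentiable function with r(y) > 0 and r(y) > y·r'(y) for all y ∈ ℝ, r(0) = μ, r'(0) = 0, solving r''(y)/(1 + r'(y)²) = (n-1)/r(y) − (1 + r'(y)²)/(λ(r(y) − y·r'(y))) for all y ∈ ℝ. Then there exists a constant y₁ > 0 such that r''(y) > 0 for all 0 < y < y₁, r''(y₁) = 0, and r''(y) < 0 for all y > y₁. -/
set_option maxHeartbeats 1000000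
open Set Filter
open Set Filter

-- helper: local strict mono from positive continuous derivative
lemma aux_mono {g : ℝ → ℝ} {c : ℝ} (hg : Continuous g)
    (hg' : Continuous (deriv g)) (h : 0 < deriv g c) :
    ∃ η > 0, StrictMonoOn g (Set.Icc (c - η) (c + η)) := by
  have h1 : (deriv g) ⁻¹' (Set.Ioi 0) ∈ nhds c :=
    hg'.continuousAt.preimage_mem_nhds (Ioi_mem_nhds h)
  obtain ⟨ε, hε, hball⟩ := Metric.mem_nhds_iff.mp h1
  refine ⟨ε / 2, by linarith, strictMonoOn_of_deriv_pos (convex_Icc _ _)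
    hg.continuousOn ?_⟩
  intro x hx
  rw [interior_Icc] at hx
  apply hball
  simp only [Metric.mem_ball, Real.dist_eq]
  rw [abs_lt]
  constructor <;> [linarith [hx.1]; linarith [hx.2]]

lemma aux_anti {g : ℝ → ℝ} {c : ℝ} (hg : Continuous g)
    (hg' : Continuous (deriv g)) (h : deriv g c < 0) :
    ∃ η > 0, StrictAntiOn g (Set.Icc (c - η) (c + η)) := by
  have h1 : (deriv g) ⁻¹' (Set.Iio 0) ∈ nhds c :=
    hg'.continuousAt.preimage_mem_nhds (Iio_mem_nhds h)
  obtain ⟨ε, hε, hball⟩ := Metric.mem_nhds_iff.mp h1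
  refine ⟨ε / 2, by linarith, strictAntiOn_of_deriv_neg (convex_Icc _ _)
    hg.continuousOn ?_⟩
  intro x hx
  rw [interior_Icc] at hx
  apply hball
  simp only [Metric.mem_ball, Real.dist_eq]
  rw [abs_lt]
  constructor <;> [linarith [hx.1]; linarith [hx.2]]

-- helper: limit from the left
lemma aux_left_le {g : ℝ → ℝ} {a c : ℝ} (hg : Continuous g) (hac : a < c)
    (h : ∀ y, a ≤ y → y < c → 0 ≤ g y) : 0 ≤ g c := by
  have h1 : ∀ᶠ y in nhdsWithin c (Set.Iio c), 0 ≤ g y := by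
    have h2 : ∀ᶠ y in nhds c, a < y := eventually_gt_nhds hac
    filter_upwards [h2.filter_mono nhdsWithin_le_nhds,
      self_mem_nhdsWithin] with y hy1 hy2
    exact h y hy1.le hy2
  have h3 : Filter.Tendsto g (nhdsWithin c (Set.Iio c)) (nhds (g c)) :=
    hg.continuousAt.tendsto.mono_left nhdsWithin_le_nhds
  exact ge_of_tendsto h3 h1

lemma aux_nbhd_pos {g : ℝ → ℝ} {c : ℝ} (hg : Continuous g) (h : 0 < g c) :
    ∃ η > 0, ∀ y, |y - c| < η → 0 < g y := by
  have h1 : g ⁻¹' (Set.Ioi 0) ∈ nhds c :=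
    hg.continuousAt.preimage_mem_nhds (Ioi_mem_nhds h)
  obtain ⟨ε, hε, hball⟩ := Metric.mem_nhds_iff.mp h1
  exact ⟨ε, hε, fun y hy => hball (by simpa [Real.dist_eq] using hy)⟩


/-- There is a unique inflection point `y₁ > 0` of the solution of the inverse
mean curvature flow soliton ODE: the solution is convex before `y₁` and
concave after `y₁`. -/
theorem exists_inflection_point (n : ℕ) (hn : 2 ≤ n) (lam : ℝ)
    (hlam : 1 / ((n : ℝ) - 1) < lam) (mu : ℝ) (hmu : 0 < mu)
    (r : ℝ → ℝ) (hC : ContDiff ℝ 2 r)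
    (hpos : ∀ y : ℝ, 0 < r y)
    (hstruct : ∀ y : ℝ, y * deriv r y < r y)
    (hr0 : r 0 = mu) (hr'0 : deriv r 0 = 0)
    (hode : ∀ y : ℝ,
      deriv (deriv r) y / (1 + (deriv r y) ^ 2) =
        ((n : ℝ) - 1) / r y -
          (1 + (deriv r y) ^ 2) / (lam * (r y - y * deriv r y))) :
    ∃ y₁ : ℝ, 0 < y₁ ∧
      (∀ y : ℝ, 0 < y → y < y₁ → 0 < deriv (deriv r) y) ∧
      deriv (deriv r) y₁ = 0 ∧
      (∀ y : ℝ, y₁ < y → deriv (deriv r) y < 0) := by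
  -- basic regularity
  have hC1 : ContDiff ℝ 1 (deriv r) :=
    ((contDiff_succ_iff_deriv (n := 1)).mp (by exact_mod_cast hC)).2.2
  have hd1 : Differentiable ℝ r := hC.differentiable (by norm_num)
  have hd2 : Differentiable ℝ (deriv r) := hC1.differentiable one_ne_zero
  have hc0 : Continuous r := hd1.continuous
  have hc1 : Continuous (deriv r) := hd2.continuous
  have hc2 : Continuous (deriv (deriv r)) := hC1.continuous_deriv le_rfl
  -- basic positivity
  have hn1 : (1 : ℝ) ≤ (n : ℝ) - 1 := by
    have : (2 : ℝ) ≤ (n : ℝ) := by exact_mod_cast hn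
    linarith
  have hn0 : (0 : ℝ) < (n : ℝ) - 1 := by linarith
  have hlam0 : 0 < lam := lt_trans (by positivity) hlam
  have hA1 : 1 < ((n : ℝ) - 1) * lam := by
    rw [div_lt_iff₀ hn0] at hlam
    nlinarith
  have hu : ∀ y : ℝ, 0 < r y - y * deriv r y := fun y => by linarith [hstruct y]
  -- the sign function F
  set F : ℝ → ℝ := fun y =>
    ((n : ℝ) - 1) * lam * (r y - y * deriv r y) - r y * (1 + (deriv r y) ^ 2)
    with hFdef
  have hFc : Continuous F := by
    fun_prop
  -- key identity
  have hkey : ∀ y : ℝ, deriv (deriv r) y =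
      (1 + (deriv r y) ^ 2) / (lam * r y * (r y - y * deriv r y)) * F y := by
    intro y
    have h1 : (0:ℝ) < 1 + (deriv r y) ^ 2 := by positivity
    have h2 := hode y
    have h3 := hpos y
    have h4 := hu y
    rw [div_eq_iff (ne_of_gt h1)] at h2
    rw [h2, hFdef]
    have h4' : r y - deriv r y * y ≠ 0 := by rw [mul_comm]; exact h4.ne'
    field_simp
  -- sign transfer
  have hsgn_pos : ∀ y : ℝ, 0 < F y → 0 < deriv (deriv r) y := by
    intro y hF
    rw [hkey y]
    have : 0 < (1 + (deriv r y) ^ 2) / (lam * r y * (r y - y * deriv r y)) := by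
      have := hpos y; have := hu y; positivity
    exact mul_pos this hF
  have hsgn_neg : ∀ y : ℝ, F y < 0 → deriv (deriv r) y < 0 := by
    intro y hF
    rw [hkey y]
    have h5 : 0 < (1 + (deriv r y) ^ 2) / (lam * r y * (r y - y * deriv r y)) := by
      have := hpos y; have := hu y; positivity
    exact mul_neg_of_pos_of_neg h5 hF
  have hsgn_zero : ∀ y : ℝ, F y = 0 → deriv (deriv r) y = 0 := by
    intro y hF
    rw [hkey y, hF, mul_zero]
  -- derivative of F
  have hF' : ∀ y : ℝ, HasDerivAt F
      (-(((n : ℝ) - 1) * lam * y * deriv (deriv r) y)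
        - deriv r y * (1 + (deriv r y) ^ 2)
        - 2 * r y * deriv r y * deriv (deriv r) y) y := by
    intro y
    have h1 : HasDerivAt r (deriv r y) y := (hd1 y).hasDerivAt
    have h2 : HasDerivAt (deriv r) (deriv (deriv r) y) y := (hd2 y).hasDerivAt
    have h3 : HasDerivAt (fun y => y * deriv r y)
        (1 * deriv r y + y * deriv (deriv r) y) y := (hasDerivAt_id y).mul h2
    have h4 : HasDerivAt (fun y => (deriv r y) ^ 2)
        (2 * deriv r y ^ 1 * deriv (deriv r) y) y := by
      simpa using h2.fun_pow 2
    have h5 : HasDerivAt (fun y => r y * (1 + (deriv r y) ^ 2))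
        (deriv r y * (1 + (deriv r y) ^ 2)
          + r y * (0 + 2 * deriv r y ^ 1 * deriv (deriv r) y)) y :=
      h1.mul ((hasDerivAt_const y 1).add h4)
    have h6 := (((h1.fun_sub h3).const_mul (((n : ℝ) - 1) * lam)).fun_sub h5)
    refine h6.congr_deriv ?_
    ring
  have hFd : deriv F = fun y =>
      (-(((n : ℝ) - 1) * lam * y * deriv (deriv r) y)
        - deriv r y * (1 + (deriv r y) ^ 2)
        - 2 * r y * deriv r y * deriv (deriv r) y) :=
    funext fun y => (hF' y).deriv
  have hFdc : Continuous (deriv F) := by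
    rw [hFd]; fun_prop
  -- F 0 > 0
  have hF0 : 0 < F 0 := by
    simp only [hFdef, hr0, hr'0]
    nlinarith
  -- at any zero of r', F is positive (hence r'' > 0)
  have hzero_pos : ∀ y : ℝ, deriv r y = 0 → 0 < deriv (deriv r) y := by
    intro y hy
    apply hsgn_pos
    simp only [hFdef, hy, mul_zero, sub_zero]
    nlinarith [hpos y]
  -- r'' 0 > 0, so r' > 0 just to the right of 0
  obtain ⟨η, hη, hmono0⟩ := aux_mono hc1 hc2 (hzero_pos 0 hr'0)
  have hη' : ∀ y : ℝ, 0 < y → y ≤ η → 0 < deriv r y := by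
    intro y hy1 hy2
    have := hmono0 (by constructor <;> [linarith; linarith])
      (⟨by linarith, by linarith⟩ : y ∈ Set.Icc (0 - η) (0 + η)) hy1
    rwa [hr'0] at this
  -- r' > 0 on all of (0, ∞)
  have hppos : ∀ y : ℝ, 0 < y → 0 < deriv r y := by
    by_contra hcon
    push_neg at hcon
    obtain ⟨y₀, hy₀, hy₀'⟩ := hcon
    have hy₀η : η < y₀ := by
      by_contra hle
      push_neg at hle
      exact absurd (hη' y₀ hy₀ hle) (not_lt.mpr hy₀')
    set S : Set ℝ := Set.Icc η y₀ ∩ {y | deriv r y ≤ 0} with hSdef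
    have hScl : IsClosed S := isClosed_Icc.inter (isClosed_le hc1 continuous_const)
    have hSne : S.Nonempty := ⟨y₀, ⟨hy₀η.le, le_rfl⟩, hy₀'⟩
    have hSbd : BddBelow S := ⟨η, fun x hx => hx.1.1⟩
    set c := sInf S with hcdef
    have hcS : c ∈ S := hScl.csInf_mem hSne hSbd
    have hcη : η < c := by
      rcases lt_or_eq_of_le hcS.1.1 with h | h
      · exact h
      · exact absurd (hη' c (by linarith) (le_of_eq h.symm)) (not_lt.mpr hcS.2)
    have hbefore : ∀ y : ℝ, η ≤ y → y < c → 0 < deriv r y := by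
      intro y hy1 hy2
      by_contra hle
      push_neg at hle
      have : y ∈ S := ⟨⟨hy1, by linarith [hcS.1.2]⟩, hle⟩
      exact absurd (csInf_le hSbd this) (not_le.mpr hy2)
    have hc0' : deriv r c = 0 := by
      have h1 : 0 ≤ deriv r c :=
        aux_left_le hc1 hcη (fun y h1 h2 => (hbefore y h1 h2).le)
      exact le_antisymm hcS.2 h1
    obtain ⟨η₂, hη₂, hmono₂⟩ := aux_mono hc1 hc2 (hzero_pos c hc0')
    set y := max η (c - η₂ / 2) with hydef
    have hy1 : η ≤ y := le_max_left _ _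
    have hy2 : y < c := max_lt hcη (by linarith)
    have hy3 : y ∈ Set.Icc (c - η₂) (c + η₂) := by
      constructor
      · calc c - η₂ ≤ c - η₂ / 2 := by linarith
          _ ≤ y := le_max_right _ _
      · linarith
    have := hmono₂ hy3 (⟨by linarith, by linarith⟩ : c ∈ Set.Icc (c - η₂) (c + η₂)) hy2
    rw [hc0'] at this
    exact absurd this (not_lt.mpr (hbefore y hy1 hy2).le)
  -- F is eventually nonpositive
  have hev : ∃ Y : ℝ, 0 < Y ∧ F Y ≤ 0 := by
    by_contra hcon
    push_neg at hcon
    have hFpos : ∀ y : ℝ, 0 < y → 0 < F y := fun y hy => hcon y hy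
    have hr''pos : ∀ y : ℝ, 0 < y → 0 < deriv (deriv r) y :=
      fun y hy => hsgn_pos y (hFpos y hy)
    obtain ⟨m, hmdef⟩ : ∃ m : ℝ, m = deriv r 1 := ⟨_, rfl⟩
    have hm : 0 < m := hmdef ▸ hppos 1 one_pos
    -- r' is monotone on [1, ∞)
    have hmono1 : MonotoneOn (deriv r) (Set.Ici 1) := by
      apply monotoneOn_of_deriv_nonneg (convex_Ici 1) hc1.continuousOn
        (hd2.differentiableOn)
      intro x hx
      rw [interior_Ici] at hx
      exact (hr''pos x (by linarith [mem_Ioi.mp hx])).le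
    have hrm : ∀ y : ℝ, 1 ≤ y → m ≤ deriv r y := fun y hy =>
      hmdef ▸ hmono1 (mem_Ici.mpr le_rfl) (mem_Ici.mpr hy) hy
    -- r y ≥ m * (y - 1) for y ≥ 1
    have hgrow : ∀ y : ℝ, 1 ≤ y → m * (y - 1) ≤ r y := by
      have hder : ∀ x : ℝ, HasDerivAt (fun y => r y - m * y) (deriv r x - m) x := by
        intro x
        simpa using ((hd1 x).hasDerivAt.fun_sub ((hasDerivAt_id x).const_mul m))
      have hmono2 : MonotoneOn (fun y => r y - m * y) (Set.Ici 1) := by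
        apply monotoneOn_of_deriv_nonneg (convex_Ici 1)
          (by fun_prop) (fun x _ => ((hder x).differentiableAt).differentiableWithinAt)
        intro x hx
        rw [interior_Ici] at hx
        rw [(hder x).deriv]
        linarith [hrm x (le_of_lt (mem_Ioi.mp hx))]
      intro y hy
      have := hmono2 (mem_Ici.mpr le_rfl) (mem_Ici.mpr hy) hy
      simp only at this
      nlinarith [hpos 1]
    -- g = r - y r' is antitone on [1, ∞)
    have hganti : AntitoneOn (fun y => r y - y * deriv r y) (Set.Ici 1) := by
      have hder : ∀ x : ℝ, HasDerivAt (fun y => r y - y * deriv r y)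
          (-(x * deriv (deriv r) x)) x := by
        intro x
        have h3 : HasDerivAt (fun y => y * deriv r y)
            (1 * deriv r x + x * deriv (deriv r) x) x :=
          (hasDerivAt_id x).mul (hd2 x).hasDerivAt
        have := (hd1 x).hasDerivAt.fun_sub h3
        refine this.congr_deriv ?_
        ring
      apply antitoneOn_of_deriv_nonpos (convex_Ici 1) (by fun_prop)
        (fun x _ => ((hder x).differentiableAt).differentiableWithinAt)
      intro x hx
      rw [interior_Ici] at hx
      rw [(hder x).deriv]
      have := hr''pos x (by linarith [mem_Ioi.mp hx])
      have hx1 : (0:ℝ) < x := by linarith [mem_Ioi.mp hx]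
      nlinarith
    obtain ⟨K, hKdef⟩ : ∃ K : ℝ, K = ((n : ℝ) - 1) * lam * (r 1 - 1 * deriv r 1) :=
      ⟨_, rfl⟩
    have hK : 0 < K := by
      rw [hKdef]
      have := hu 1
      simp only [one_mul] at this ⊢
      nlinarith
    obtain ⟨Y, hYdef⟩ : ∃ Y : ℝ, Y = 1 + (K + 1) / m := ⟨_, rfl⟩
    have hY1 : 1 < Y := by
      have : 0 < (K + 1) / m := by positivity
      linarith
    have hgY : r Y - Y * deriv r Y ≤ r 1 - 1 * deriv r 1 := by
      have := hganti (mem_Ici.mpr le_rfl) (mem_Ici.mpr hY1.le) hY1.le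
      simpa using this
    have hFY : F Y ≤ 0 := by
      have h1 : m * (Y - 1) = K + 1 := by
        rw [hYdef]
        field_simp
        ring
      have h2 : m * (Y - 1) ≤ r Y := hgrow Y hY1.le
      have h3 : r Y ≤ r Y * (1 + (deriv r Y) ^ 2) := by
        nlinarith [hpos Y, sq_nonneg (deriv r Y)]
      have h4 : ((n : ℝ) - 1) * lam * (r Y - Y * deriv r Y) ≤ K := by
        rw [hKdef]
        have hnl : 0 < ((n : ℝ) - 1) * lam := by positivity
        nlinarith
      simp only [hFdef]
      linarith
    exact absurd hFY (not_le.mpr (hFpos Y (by linarith)))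
  obtain ⟨Y, hY0, hYF⟩ := hev
  -- F > 0 near 0
  obtain ⟨η₀, hη₀, hball₀⟩ := aux_nbhd_pos hFc hF0
  have hYη₀ : η₀ / 2 < Y := by
    by_contra hle
    push_neg at hle
    have : 0 < F Y := hball₀ Y (by rw [sub_zero, abs_of_pos hY0]; linarith)
    linarith
  -- the first zero y₁
  set T : Set ℝ := Set.Icc (η₀ / 2) Y ∩ {y | F y ≤ 0} with hTdef
  have hTcl : IsClosed T := isClosed_Icc.inter (isClosed_le hFc continuous_const)
  have hTne : T.Nonempty := ⟨Y, ⟨hYη₀.le, le_rfl⟩, hYF⟩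
  have hTbd : BddBelow T := ⟨η₀ / 2, fun x hx => hx.1.1⟩
  set y₁ := sInf T with hy₁def
  have hy₁T : y₁ ∈ T := hTcl.csInf_mem hTne hTbd
  have hy₁pos : 0 < y₁ := lt_of_lt_of_le (by linarith) hy₁T.1.1
  -- F > 0 on (0, y₁)
  have hFbefore : ∀ y : ℝ, 0 < y → y < y₁ → 0 < F y := by
    intro y hy1 hy2
    rcases lt_or_ge y (η₀ / 2) with h | h
    · exact hball₀ y (by rw [sub_zero, abs_of_pos hy1]; linarith)
    · by_contra hle
      push_neg at hle
      have hyY : y ≤ Y := by linarith [hy₁T.1.2]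
      have : y ∈ T := ⟨⟨h, hyY⟩, hle⟩
      exact absurd (csInf_le hTbd this) (not_le.mpr hy2)
  -- F y₁ = 0
  have hFy₁ : F y₁ = 0 := by
    refine le_antisymm hy₁T.2 ?_
    exact aux_left_le hFc (show y₁ / 2 < y₁ by linarith)
      (fun y h1 h2 => (hFbefore y (by linarith) h2).le)
  have hr''y₁ : deriv (deriv r) y₁ = 0 := hsgn_zero y₁ hFy₁
  -- at every positive zero of F, deriv F < 0
  have hFder_neg : ∀ z : ℝ, 0 < z → F z = 0 → deriv F z < 0 := by
    intro z hz hFz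
    have h1 := hsgn_zero z hFz
    simp only [hFd, h1]
    have h2 := hppos z hz
    nlinarith [sq_nonneg (deriv r z)]
  -- F < 0 on (y₁, ∞)
  have hFafter : ∀ y : ℝ, y₁ < y → F y < 0 := by
    by_contra hcon
    push_neg at hcon
    obtain ⟨y₂, hy₂, hy₂F⟩ := hcon
    -- F < 0 just after y₁
    obtain ⟨ε, hε, hanti₁⟩ := aux_anti hFc hFdc (hFder_neg y₁ hy₁pos hFy₁)
    obtain ⟨w, hwdef⟩ : ∃ w : ℝ, w = min (y₁ + ε) ((y₁ + y₂) / 2) := ⟨_, rfl⟩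
    have hw1 : y₁ < w := by rw [hwdef]; exact lt_min (by linarith) (by linarith)
    have hw2 : w < y₂ := by
      rw [hwdef]
      calc min (y₁ + ε) ((y₁ + y₂) / 2) ≤ (y₁ + y₂) / 2 := min_le_right _ _
        _ < y₂ := by linarith
    have hwF : F w < 0 := by
      have hmem : w ∈ Set.Icc (y₁ - ε) (y₁ + ε) := by
        constructor
        · linarith
        · rw [hwdef]; exact min_le_left _ _
      have := hanti₁ (⟨by linarith, by linarith⟩ : y₁ ∈ Set.Icc (y₁ - ε) (y₁ + ε))
        hmem hw1
      rwa [hFy₁] at this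
    -- first zero of F after w
    set U : Set ℝ := Set.Icc w y₂ ∩ {y | 0 ≤ F y} with hUdef
    have hUcl : IsClosed U := isClosed_Icc.inter (isClosed_le continuous_const hFc)
    have hUne : U.Nonempty := ⟨y₂, ⟨hw2.le, le_rfl⟩, hy₂F⟩
    have hUbd : BddBelow U := ⟨w, fun x hx => hx.1.1⟩
    set z := sInf U with hzdef
    have hzU : z ∈ U := hUcl.csInf_mem hUne hUbd
    have hzw : w < z := by
      rcases lt_or_eq_of_le hzU.1.1 with h | h
      · exact h
      · exact absurd (show (0:ℝ) ≤ F w by rw [h]; exact hzU.2) (not_le.mpr hwF)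
    have hzbefore : ∀ y : ℝ, w ≤ y → y < z → F y < 0 := by
      intro y h1 h2
      by_contra hle
      push_neg at hle
      have : y ∈ U := ⟨⟨h1, by linarith [hzU.1.2]⟩, hle⟩
      exact absurd (csInf_le hUbd this) (not_le.mpr h2)
    have hFz : F z = 0 := by
      refine le_antisymm ?_ hzU.2
      have := aux_left_le (g := fun y => -(F y)) hFc.neg hzw
        (fun y h1 h2 => by simpa using (hzbefore y h1 h2).le)
      simpa using this
    have hzpos : 0 < z := lt_trans (lt_trans hy₁pos hw1) hzw
    obtain ⟨ε', hε', hanti₂⟩ := aux_anti hFc hFdc (hFder_neg z hzpos hFz)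
    obtain ⟨v, hvdef⟩ : ∃ v : ℝ, v = max w (z - ε' / 2) := ⟨_, rfl⟩
    have hv1 : w ≤ v := hvdef ▸ le_max_left _ _
    have hv2 : v < z := by rw [hvdef]; exact max_lt hzw (by linarith)
    have hv3 : v ∈ Set.Icc (z - ε') (z + ε') := by
      constructor
      · calc z - ε' ≤ z - ε' / 2 := by linarith
          _ ≤ v := hvdef ▸ le_max_right _ _
      · linarith
    have := hanti₂ hv3 (⟨by linarith, by linarith⟩ : z ∈ Set.Icc (z - ε') (z + ε')) hv2
    rw [hFz] at this
    exact absurd this (not_lt.mpr (hzbefore v hv1 hv2).le)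
  exact ⟨y₁, hy₁pos, fun y h1 h2 => hsgn_pos y (hFbefore y h1 h2), hr''y₁,
    fun y hy => hsgn_neg y (hFafter y hy)⟩
end

section
/- Let n ≥ 2 be an integer, λ > 1/(n-1), and μ > 0. Then there exists a twice continuously differentiable function r : [0,∞) → ℝ satisfying r(y) > 0 for all y ≥ 0, r(y) > y·r'(y) for all y > 0, r(0) = μ, r'(0) = 0, r''(0) = (n − 1 − 1/λ)/μ, and r''(y)/(1 + r'(y)²) = (n-1)/r(y) − (1 + r'(y)²)/(λ(r(y) − y·r'(y))) for all y > 0; moreover any two such functions coincide on [0,∞). -/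
/-- `r : [0,∞) → ℝ` (modelled as a function on `ℝ` with all conditions imposed
on `Set.Ici 0`, and one-sided derivatives `derivWithin · (Set.Ici 0)`) is a
solution of the initial value problem for the inverse mean curvature flow
soliton ODE on the half line. -/
def IsHalfLineSolution (n : ℕ) (lam mu : ℝ) (r : ℝ → ℝ) : Prop :=
  ContDiffOn ℝ 2 r (Set.Ici 0) ∧
  (∀ y : ℝ, 0 ≤ y → 0 < r y) ∧
  (∀ y : ℝ, 0 < y → y * derivWithin r (Set.Ici 0) y < r y) ∧
  r 0 = mu ∧
  derivWithin r (Set.Ici 0) 0 = 0 ∧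
  derivWithin (derivWithin r (Set.Ici 0)) (Set.Ici 0) 0 =
    ((n : ℝ) - 1 - 1 / lam) / mu ∧
  (∀ y : ℝ, 0 < y →
    derivWithin (derivWithin r (Set.Ici 0)) (Set.Ici 0) y /
        (1 + (derivWithin r (Set.Ici 0) y) ^ 2) =
      ((n : ℝ) - 1) / r y -
        (1 + (derivWithin r (Set.Ici 0) y) ^ 2) /
          (lam * (r y - y * derivWithin r (Set.Ici 0) y)))

open Set
set_option linter.unusedSectionVars false
set_option maxHeartbeats 1000000

namespace IMCFAux

noncomputable def Pc (κ lam : ℝ) : ℝ := Real.sqrt (lam * κ - 1)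
noncomputable def dc (κ lam mu : ℝ) : ℝ := mu / (lam * κ)
noncomputable def cp (κ lam x : ℝ) : ℝ := max (-1) (min x (Pc κ lam + 1))
noncomputable def cr (mu x : ℝ) : ℝ := max x (mu / 2)
noncomputable def cu (κ lam mu x : ℝ) : ℝ := max x (dc κ lam mu / 2)
noncomputable def F2 (κ lam mu y r p : ℝ) : ℝ :=
  (1 + cp κ lam p ^ 2) *
    (κ / cr mu r - (1 + cp κ lam p ^ 2) / (lam * cu κ lam mu (r - y * cp κ lam p)))
noncomputable def vf (κ lam mu : ℝ) (y : ℝ) (x : ℝ × ℝ) : ℝ × ℝ :=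
  (cp κ lam x.2, F2 κ lam mu y x.1 x.2)

-- constants for estimates
noncomputable def MA (κ lam : ℝ) : ℝ := 1 + (Pc κ lam + 1) ^ 2
noncomputable def KA (κ lam : ℝ) : ℝ := 2 * (Pc κ lam + 1)
noncomputable def MB (κ mu : ℝ) : ℝ := 2 * κ / mu
noncomputable def KB (κ mu : ℝ) : ℝ := κ * (4 / mu ^ 2)
noncomputable def MU (κ lam mu : ℝ) : ℝ := 2 / (lam * dc κ lam mu)
noncomputable def KU (κ lam mu b : ℝ) : ℝ := (1 + b) / lam / (dc κ lam mu / 2) ^ 2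
noncomputable def K2 (κ lam mu b : ℝ) : ℝ :=
  MA κ lam * KB κ mu + MB κ mu * KA κ lam +
    (MA κ lam ^ 2 * KU κ lam mu b + MU κ lam mu * (2 * MA κ lam * KA κ lam))
noncomputable def CC (κ lam mu : ℝ) : ℝ :=
  max (Pc κ lam + 1) (MA κ lam * (MB κ mu + MA κ lam * MU κ lam mu))


lemma key_mul {a a' c c' Ka Kc Ma Mc d : ℝ} (h1 : |a - a'| ≤ Ka * d) (h2 : |c - c'| ≤ Kc * d)
    (ha : |a| ≤ Ma) (hc : |c'| ≤ Mc) : |a * c - a' * c'| ≤ (Ma * Kc + Mc * Ka) * d := by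
  have e : a * c - a' * c' = a * (c - c') + c' * (a - a') := by ring
  calc |a * c - a' * c'| = |a * (c - c') + c' * (a - a')| := by rw [e]
    _ ≤ |a * (c - c')| + |c' * (a - a')| := abs_add_le _ _
    _ = |a| * |c - c'| + |c'| * |a - a'| := by rw [abs_mul, abs_mul]
    _ ≤ Ma * (Kc * d) + Mc * (Ka * d) := by
        gcongr <;> [exact (abs_nonneg _).trans ha; exact (abs_nonneg _).trans hc]
    _ = (Ma * Kc + Mc * Ka) * d := by ring

lemma key_inv {w w' c Kw d : ℝ} (hc : 0 < c) (hw : c ≤ w) (hw' : c ≤ w')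
    (h : |w - w'| ≤ Kw * d) : |1 / w - 1 / w'| ≤ Kw / c ^ 2 * d := by
  have hwp : 0 < w := lt_of_lt_of_le hc hw
  have hw'p : 0 < w' := lt_of_lt_of_le hc hw'
  have e : 1 / w - 1 / w' = (w' - w) / (w * w') := by field_simp
  rw [e, abs_div, abs_of_pos (mul_pos hwp hw'p)]
  rw [div_le_iff₀ (mul_pos hwp hw'p)]
  have h1 : |w' - w| ≤ Kw * d := by rwa [abs_sub_comm]
  have h2 : c ^ 2 ≤ w * w' := by nlinarith
  have hKd : 0 ≤ Kw * d := le_trans (abs_nonneg _) h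
  calc |w' - w| ≤ Kw * d := h1
    _ = Kw / c ^ 2 * d * c ^ 2 := by field_simp
    _ ≤ Kw / c ^ 2 * d * (w * w') := by
        gcongr
        have : Kw / c ^2 * d = (Kw * d) / c^2 := by ring
        rw [this]; positivity

variable {κ lam mu : ℝ}


section est
variable (hκ : 1 ≤ κ) (hlam : 0 < lam) (hΛ : 1 < lam * κ) (hmu : 0 < mu)

lemma Pc_nonneg : 0 ≤ Pc κ lam := Real.sqrt_nonneg _

include hlam hΛ hmu in
lemma dc_pos : 0 < dc κ lam mu := div_pos hmu (by linarith)

lemma cp_le {x : ℝ} : cp κ lam x ≤ Pc κ lam + 1 :=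
  max_le (by linarith [Pc_nonneg (κ := κ) (lam := lam)]) (min_le_right _ _)

lemma neg_one_le_cp {x : ℝ} : -1 ≤ cp κ lam x := le_max_left _ _

lemma abs_cp_le {x : ℝ} : |cp κ lam x| ≤ Pc κ lam + 1 := by
  have h1 : -1 ≤ cp κ lam x := neg_one_le_cp
  have h2 : cp κ lam x ≤ Pc κ lam + 1 := cp_le
  have h3 : (0:ℝ) ≤ Pc κ lam := Pc_nonneg
  exact abs_le.2 ⟨by linarith, h2⟩

lemma cp_lip (x y : ℝ) : |cp κ lam x - cp κ lam y| ≤ |x - y| := by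
  rw [cp, cp, max_comm (-1) _, max_comm (-1) _]
  refine (abs_max_sub_max_le_abs _ _ _).trans ?_
  have := abs_min_sub_min_le_max x (Pc κ lam + 1) y (Pc κ lam + 1)
  simpa using this

lemma cr_ge {x : ℝ} : mu / 2 ≤ cr mu x := le_max_right _ _
lemma cu_ge {x : ℝ} : dc κ lam mu / 2 ≤ cu κ lam mu x := le_max_right _ _
lemma cr_lip (x y : ℝ) : |cr mu x - cr mu y| ≤ |x - y| := abs_max_sub_max_le_abs _ _ _
lemma cu_lip (x y : ℝ) : |cu κ lam mu x - cu κ lam mu y| ≤ |x - y| := abs_max_sub_max_le_abs _ _ _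

include hκ hlam hΛ hmu in
lemma F2_bound (y r p : ℝ) :
    |F2 κ lam mu y r p| ≤ MA κ lam * (MB κ mu + MA κ lam * MU κ lam mu) := by
  have hP : (0:ℝ) ≤ Pc κ lam := Pc_nonneg
  have hdc : 0 < dc κ lam mu := dc_pos hlam hΛ hmu
  have hcp : |cp κ lam p| ≤ Pc κ lam + 1 := abs_cp_le
  have hA : |1 + cp κ lam p ^ 2| ≤ MA κ lam := by
    rw [abs_of_nonneg (by positivity), MA]
    have := sq_abs (cp κ lam p)
    nlinarith [abs_nonneg (cp κ lam p)]
  have hcr : mu / 2 ≤ cr mu r := cr_ge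
  have hcrpos : 0 < cr mu r := lt_of_lt_of_le (by linarith) hcr
  have hBb : |κ / cr mu r| ≤ MB κ mu := by
    rw [abs_of_nonneg (by positivity), MB, div_le_div_iff₀ hcrpos (by linarith)]
    nlinarith
  have hcu : dc κ lam mu / 2 ≤ cu κ lam mu (r - y * cp κ lam p) := cu_ge
  have hcupos : 0 < cu κ lam mu (r - y * cp κ lam p) := lt_of_lt_of_le (by linarith) hcu
  have hiu : |(1 + cp κ lam p ^ 2) / (lam * cu κ lam mu (r - y * cp κ lam p))| ≤
      MA κ lam * MU κ lam mu := by
    rw [abs_div, abs_of_nonneg (by positivity : (0:ℝ) ≤ lam * cu κ lam mu (r - y * cp κ lam p))]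
    rw [div_le_iff₀ (by positivity)]
    have h1 : |1 + cp κ lam p ^ 2| ≤ MA κ lam := hA
    have hMU : MU κ lam mu * (lam * cu κ lam mu (r - y * cp κ lam p)) ≥ 1 := by
      rw [MU]
      rw [ge_iff_le, ← div_le_iff₀ (by positivity)]
      calc (1:ℝ) / (lam * cu κ lam mu (r - y * cp κ lam p)) ≤ 1 / (lam * (dc κ lam mu / 2)) :=
            one_div_le_one_div_of_le (by positivity)
              (mul_le_mul_of_nonneg_left hcu hlam.le)
        _ = 2 / (lam * dc κ lam mu) := by field_simp
    have hMApos : 0 < MA κ lam := by rw [MA]; positivity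
    nlinarith [abs_nonneg (1 + cp κ lam p ^ 2)]
  calc |F2 κ lam mu y r p| = |1 + cp κ lam p ^ 2| *
        |κ / cr mu r - (1 + cp κ lam p ^ 2) / (lam * cu κ lam mu (r - y * cp κ lam p))| := by
        rw [F2, abs_mul]
    _ ≤ MA κ lam * (MB κ mu + MA κ lam * MU κ lam mu) := by
        have := abs_sub (κ / cr mu r)
          ((1 + cp κ lam p ^ 2) / (lam * cu κ lam mu (r - y * cp κ lam p)))
        have habs : |κ / cr mu r - (1 + cp κ lam p ^ 2) /
            (lam * cu κ lam mu (r - y * cp κ lam p))| ≤ MB κ mu + MA κ lam * MU κ lam mu :=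
          (abs_sub _ _).trans (add_le_add hBb hiu)
        have hMApos : (0:ℝ) < MA κ lam := by rw [MA]; positivity
        exact mul_le_mul hA habs (abs_nonneg _) (by positivity)


include hκ hlam hΛ hmu in
lemma F2_lip {b y : ℝ} (hy : y ∈ Icc 0 b) (x z : ℝ × ℝ) :
    |F2 κ lam mu y x.1 x.2 - F2 κ lam mu y z.1 z.2| ≤ K2 κ lam mu b * dist x z := by
  obtain ⟨hy0, hyb⟩ := hy
  have hb : (0:ℝ) ≤ b := le_trans hy0 hyb
  set d := dist x z with hd
  have hd0 : 0 ≤ d := dist_nonneg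
  have hdr : |x.1 - z.1| ≤ d := by
    rw [← Real.dist_eq]; rw [hd, Prod.dist_eq]; exact le_max_left _ _
  have hdp : |x.2 - z.2| ≤ d := by
    rw [← Real.dist_eq]; rw [hd, Prod.dist_eq]; exact le_max_right _ _
  have hP : (0:ℝ) ≤ Pc κ lam := Pc_nonneg
  have hdc : 0 < dc κ lam mu := dc_pos hlam hΛ hmu
  set a := 1 + cp κ lam x.2 ^ 2 with ha
  set a' := 1 + cp κ lam z.2 ^ 2 with ha'
  set B := κ / cr mu x.1 with hB
  set B' := κ / cr mu z.1 with hB'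
  set W := lam * cu κ lam mu (x.1 - y * cp κ lam x.2) with hW
  set W' := lam * cu κ lam mu (z.1 - y * cp κ lam z.2) with hW'
  have hMA : (0:ℝ) < MA κ lam := by rw [MA]; positivity
  have hma : |a| ≤ MA κ lam := by
    rw [ha, abs_of_nonneg (by positivity), MA]
    nlinarith [abs_cp_le (κ := κ) (lam := lam) (x := x.2), sq_abs (cp κ lam x.2),
      abs_nonneg (cp κ lam x.2)]
  have hma' : |a'| ≤ MA κ lam := by
    rw [ha', abs_of_nonneg (by positivity), MA]
    nlinarith [abs_cp_le (κ := κ) (lam := lam) (x := z.2), sq_abs (cp κ lam z.2),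
      abs_nonneg (cp κ lam z.2)]
  have hea : |a - a'| ≤ KA κ lam * d := by
    have e : a - a' = (cp κ lam x.2 - cp κ lam z.2) * (cp κ lam x.2 + cp κ lam z.2) := by
      rw [ha, ha']; ring
    rw [e, abs_mul]
    have h1 : |cp κ lam x.2 - cp κ lam z.2| ≤ d := (cp_lip _ _).trans hdp
    have h2 : |cp κ lam x.2 + cp κ lam z.2| ≤ 2 * (Pc κ lam + 1) := by
      calc |cp κ lam x.2 + cp κ lam z.2| ≤ |cp κ lam x.2| + |cp κ lam z.2| := abs_add_le _ _
        _ ≤ 2 * (Pc κ lam + 1) := by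
            have := abs_cp_le (κ := κ) (lam := lam) (x := x.2)
            have := abs_cp_le (κ := κ) (lam := lam) (x := z.2)
            linarith
    calc |cp κ lam x.2 - cp κ lam z.2| * |cp κ lam x.2 + cp κ lam z.2|
        ≤ d * (2 * (Pc κ lam + 1)) :=
          mul_le_mul h1 h2 (abs_nonneg _) hd0
      _ = KA κ lam * d := by rw [KA]; ring
  have hcr1 : mu / 2 ≤ cr mu x.1 := cr_ge
  have hcr2 : mu / 2 ≤ cr mu z.1 := cr_ge
  have heB : |B - B'| ≤ KB κ mu * d := by
    have e : B - B' = κ * (1 / cr mu x.1 - 1 / cr mu z.1) := by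
      rw [hB, hB', mul_sub, mul_one_div, mul_one_div]
    rw [e, abs_mul, abs_of_nonneg (by linarith : (0:ℝ) ≤ κ)]
    have h1 : |cr mu x.1 - cr mu z.1| ≤ 1 * d := by
      rw [one_mul]; exact (cr_lip _ _).trans hdr
    have h2 := key_inv (by linarith : (0:ℝ) < mu / 2) hcr1 hcr2 h1
    calc κ * |1 / cr mu x.1 - 1 / cr mu z.1| ≤ κ * (1 / (mu / 2) ^ 2 * d) := by
          exact mul_le_mul_of_nonneg_left h2 (by linarith)
      _ = KB κ mu * d := by
          have hmne : mu ≠ 0 := ne_of_gt hmu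
          rw [KB]; field_simp; ring
  have hmB' : |B'| ≤ MB κ mu := by
    have hk0 : (0:ℝ) < κ := by linarith
    have hcr2p : (0:ℝ) < cr mu z.1 := lt_of_lt_of_le (by linarith) hcr2
    rw [hB', abs_of_nonneg (div_pos hk0 hcr2p).le, MB,
      div_le_div_iff₀ (lt_of_lt_of_le (by linarith) hcr2) (by linarith)]
    nlinarith
  have hWc : lam * (dc κ lam mu / 2) ≤ W := by
    rw [hW]; exact mul_le_mul_of_nonneg_left cu_ge hlam.le
  have hWc' : lam * (dc κ lam mu / 2) ≤ W' := by
    rw [hW']; exact mul_le_mul_of_nonneg_left cu_ge hlam.le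
  have hWpos : (0:ℝ) < lam * (dc κ lam mu / 2) := by positivity
  have heiu : |1 / W - 1 / W'| ≤ KU κ lam mu b * d := by
    have harg : |(x.1 - y * cp κ lam x.2) - (z.1 - y * cp κ lam z.2)| ≤ (1 + b) * d := by
      have e : (x.1 - y * cp κ lam x.2) - (z.1 - y * cp κ lam z.2) =
          (x.1 - z.1) - y * (cp κ lam x.2 - cp κ lam z.2) := by ring
      rw [e]
      calc |(x.1 - z.1) - y * (cp κ lam x.2 - cp κ lam z.2)|
          ≤ |x.1 - z.1| + |y * (cp κ lam x.2 - cp κ lam z.2)| := abs_sub _ _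
        _ ≤ d + b * d := by
            rw [abs_mul, abs_of_nonneg hy0]
            have h1 : |cp κ lam x.2 - cp κ lam z.2| ≤ d := (cp_lip _ _).trans hdp
            have := mul_le_mul hyb h1 (abs_nonneg _) hb
            linarith
        _ = (1 + b) * d := by ring
    have hWW : |W - W'| ≤ (lam * (1 + b)) * d := by
      have e : W - W' = lam * (cu κ lam mu (x.1 - y * cp κ lam x.2) -
          cu κ lam mu (z.1 - y * cp κ lam z.2)) := by rw [hW, hW']; ring
      rw [e, abs_mul, abs_of_nonneg hlam.le, mul_assoc]
      exact mul_le_mul_of_nonneg_left ((cu_lip _ _).trans harg) hlam.le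
    have h2 := key_inv hWpos hWc hWc' hWW
    refine h2.trans (le_of_eq ?_)
    have h3 : lam ≠ 0 := ne_of_gt hlam
    have h4 : dc κ lam mu ≠ 0 := ne_of_gt hdc
    rw [KU]
    field_simp
  have hmiu' : |1 / W'| ≤ MU κ lam mu := by
    have hW'p : (0:ℝ) < W' := lt_of_lt_of_le hWpos hWc'
    rw [abs_of_nonneg (one_div_nonneg.mpr hW'p.le)]
    rw [MU]
    calc 1 / W' ≤ 1 / (lam * (dc κ lam mu / 2)) := one_div_le_one_div_of_le hWpos hWc'
      _ = 2 / (lam * dc κ lam mu) := by field_simp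
  have key1 : |a * B - a' * B'| ≤ (MA κ lam * KB κ mu + MB κ mu * KA κ lam) * d :=
    key_mul hea heB hma hmB'
  have key2 : |a * a - a' * a'| ≤ (MA κ lam * KA κ lam + MA κ lam * KA κ lam) * d :=
    key_mul hea hea hma hma'
  have hmaa : |a * a| ≤ MA κ lam ^ 2 := by
    rw [abs_mul]; nlinarith [abs_nonneg a]
  have key3 : |(a * a) * (1 / W) - (a' * a') * (1 / W')| ≤
      (MA κ lam ^ 2 * KU κ lam mu b + MU κ lam mu * (MA κ lam * KA κ lam + MA κ lam * KA κ lam)) * d :=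
    key_mul key2 heiu hmaa hmiu'
  have eF : F2 κ lam mu y x.1 x.2 = a * B - (a * a) * (1 / W) := by
    rw [F2, ha, hB, hW]; ring
  have eF' : F2 κ lam mu y z.1 z.2 = a' * B' - (a' * a') * (1 / W') := by
    rw [F2, ha', hB', hW']; ring
  rw [eF, eF']
  calc |a * B - (a * a) * (1 / W) - (a' * B' - (a' * a') * (1 / W'))|
      = |(a * B - a' * B') - ((a * a) * (1 / W) - (a' * a') * (1 / W'))| := by ring_nf
    _ ≤ |a * B - a' * B'| + |(a * a) * (1 / W) - (a' * a') * (1 / W')| := abs_sub _ _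
    _ ≤ (MA κ lam * KB κ mu + MB κ mu * KA κ lam) * d +
        (MA κ lam ^ 2 * KU κ lam mu b + MU κ lam mu * (MA κ lam * KA κ lam + MA κ lam * KA κ lam)) * d :=
        add_le_add key1 key3
    _ = K2 κ lam mu b * d := by rw [K2]; ring

include hκ hlam hΛ hmu in
lemma vf_lip {b y : ℝ} (hy : y ∈ Icc 0 b) (x z : ℝ × ℝ) :
    dist (vf κ lam mu y x) (vf κ lam mu y z) ≤ max 1 (K2 κ lam mu b) * dist x z := by
  rw [Prod.dist_eq]
  have hd0 : (0:ℝ) ≤ dist x z := dist_nonneg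
  apply max_le
  · calc dist (vf κ lam mu y x).1 (vf κ lam mu y z).1 = |cp κ lam x.2 - cp κ lam z.2| := by simp [vf, Real.dist_eq]
      _ ≤ |x.2 - z.2| := cp_lip _ _
      _ ≤ dist x z := by rw [← Real.dist_eq, Prod.dist_eq]; exact le_max_right _ _
      _ = 1 * dist x z := (one_mul _).symm
      _ ≤ max 1 (K2 κ lam mu b) * dist x z :=
          mul_le_mul_of_nonneg_right (le_max_left _ _) hd0
  · calc dist (vf κ lam mu y x).2 (vf κ lam mu y z).2
        = |F2 κ lam mu y x.1 x.2 - F2 κ lam mu y z.1 z.2| := by simp [vf, Real.dist_eq]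
      _ ≤ K2 κ lam mu b * dist x z := F2_lip hκ hlam hΛ hmu hy x z
      _ ≤ max 1 (K2 κ lam mu b) * dist x z :=
          mul_le_mul_of_nonneg_right (le_max_right _ _) hd0

include hκ hlam hΛ hmu in
lemma vf_norm (y : ℝ) (x : ℝ × ℝ) : ‖vf κ lam mu y x‖ ≤ CC κ lam mu := by
  rw [Prod.norm_def]
  apply max_le
  · calc ‖(vf κ lam mu y x).1‖ = |cp κ lam x.2| := by simp [vf, Real.norm_eq_abs]
      _ ≤ Pc κ lam + 1 := abs_cp_le
      _ ≤ CC κ lam mu := le_max_left _ _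
  · calc ‖(vf κ lam mu y x).2‖ = |F2 κ lam mu y x.1 x.2| := by simp [vf, Real.norm_eq_abs]
      _ ≤ MA κ lam * (MB κ mu + MA κ lam * MU κ lam mu) := F2_bound hκ hlam hΛ hmu _ _ _
      _ ≤ CC κ lam mu := le_max_right _ _

include hlam hΛ hmu in
lemma vf_cont : Continuous (fun zx : ℝ × (ℝ × ℝ) => vf κ lam mu zx.1 zx.2) := by
  have hdc : 0 < dc κ lam mu := dc_pos hlam hΛ hmu
  have hcp : Continuous (cp κ lam) := continuous_const.max (continuous_id.min continuous_const)
  have hcr : Continuous (cr mu) := continuous_id.max continuous_const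
  have hcu : Continuous (cu κ lam mu) := continuous_id.max continuous_const
  have hp2 : Continuous fun zx : ℝ × (ℝ × ℝ) => zx.2.2 := continuous_snd.comp continuous_snd
  have hr1 : Continuous fun zx : ℝ × (ℝ × ℝ) => zx.2.1 := continuous_fst.comp continuous_snd
  have hA : Continuous fun zx : ℝ × (ℝ × ℝ) => 1 + cp κ lam zx.2.2 ^ 2 :=
    continuous_const.add ((hcp.comp hp2).pow 2)
  have hBc : Continuous fun zx : ℝ × (ℝ × ℝ) => κ / cr mu zx.2.1 := by
    apply continuous_const.div (hcr.comp hr1)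
    intro zx
    have h : mu / 2 ≤ cr mu zx.2.1 := cr_ge
    exact ne_of_gt (lt_of_lt_of_le (by linarith) h)
  have hWc : Continuous fun zx : ℝ × (ℝ × ℝ) =>
      lam * cu κ lam mu (zx.2.1 - zx.1 * cp κ lam zx.2.2) := by
    exact continuous_const.mul (hcu.comp (hr1.sub (continuous_fst.mul (hcp.comp hp2))))
  have hiu : Continuous fun zx : ℝ × (ℝ × ℝ) => (1 + cp κ lam zx.2.2 ^ 2) /
      (lam * cu κ lam mu (zx.2.1 - zx.1 * cp κ lam zx.2.2)) := by
    apply hA.div hWc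
    intro zx
    have h : dc κ lam mu / 2 ≤ cu κ lam mu (zx.2.1 - zx.1 * cp κ lam zx.2.2) := cu_ge
    exact ne_of_gt (mul_pos hlam (lt_of_lt_of_le (by linarith) h))
  exact (hcp.comp hp2).prodMk (hA.mul (hBc.sub hiu))

end est
end IMCFAux

open Set Filter Topology
set_option linter.unusedSectionVars false
set_option maxHeartbeats 1000000

namespace IMCFAux

variable {κ lam mu : ℝ}

section more
variable (hκ : 1 ≤ κ) (hlam : 0 < lam) (hΛ : 1 < lam * κ) (hmu : 0 < mu)

include hΛ in
lemma Pc_pos : 0 < Pc κ lam := Real.sqrt_pos.2 (by linarith)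

include hΛ in
lemma Pc_sq : Pc κ lam ^ 2 = lam * κ - 1 := Real.sq_sqrt (by linarith)

include hΛ hmu in
lemma dc_lt_mu : dc κ lam mu < mu := div_lt_self hmu hΛ

lemma cp_eq {x : ℝ} (h1 : -1 ≤ x) (h2 : x ≤ Pc κ lam + 1) : cp κ lam x = x := by
  rw [cp, min_eq_left h2, max_eq_right h1]

lemma cr_eq {x : ℝ} (h : mu / 2 ≤ x) : cr mu x = x := max_eq_left h
lemma cu_eq {x : ℝ} (h : dc κ lam mu / 2 ≤ x) : cu κ lam mu x = x := max_eq_left h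

include hlam hΛ hmu in
lemma F2_eq {y r p : ℝ} (hp0 : 0 ≤ p) (hpP : p ≤ Pc κ lam) (hru : dc κ lam mu ≤ r - y * p)
    (hrmu : mu ≤ r) :
    F2 κ lam mu y r p = (1 + p ^ 2) * (κ / r - (1 + p ^ 2) / (lam * (r - y * p))) := by
  have hcp : cp κ lam p = p := cp_eq (by linarith) (by linarith)
  have hdc := dc_pos hlam hΛ hmu
  rw [F2, hcp, cr_eq (by linarith), cu_eq (by linarith)]

include hlam hΛ hmu in
lemma F2_zero : F2 κ lam mu 0 mu 0 = (κ - 1/lam) / mu := by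
  have h := F2_eq hlam hΛ hmu (y := 0) (r := mu) (p := 0) le_rfl
    (Pc_nonneg) (by simpa using (dc_lt_mu hΛ hmu).le) le_rfl
  rw [h]
  have e : mu - 0 * 0 = mu := by ring
  rw [e]
  field_simp
  ring

include hκ hlam hΛ in
lemma kappa_sub_pos : 0 < κ - 1/lam := by
  have : 1/lam < κ := by rw [div_lt_iff₀ hlam]; linarith [mul_comm lam κ]
  linarith

include hκ hlam hΛ hmu in
/-- The invariant region lemma: any solution-like pair `(r, p)` on `[0, b]` with the right
initial conditions, satisfying the (clamp-compatible) ODE on the good region, stays in the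
good region. -/
lemma inv_lemma {b : ℝ} {r p q ρ : ℝ → ℝ}
    (hr : ∀ y ∈ Icc (0:ℝ) b, HasDerivWithinAt r (ρ y) (Icc 0 b) y)
    (hp : ∀ y ∈ Icc (0:ℝ) b, HasDerivWithinAt p (q y) (Icc 0 b) y)
    (hq : ContinuousOn q (Icc 0 b))
    (hρ : ∀ y ∈ Icc (0:ℝ) b, -1 ≤ p y → p y ≤ Pc κ lam + 1 → ρ y = p y)
    (hr0 : r 0 = mu) (hp0 : p 0 = 0) (hq0 : q 0 = (κ - 1/lam) / mu)
    (hode : ∀ y ∈ Icc (0:ℝ) b, 0 < y → 0 ≤ p y → p y ≤ Pc κ lam →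
      dc κ lam mu ≤ r y - y * p y → mu ≤ r y →
      q y = (1 + p y ^ 2) * (κ / r y - (1 + p y ^ 2) / (lam * (r y - y * p y)))) :
    ∀ y ∈ Icc (0:ℝ) b, (0 ≤ p y ∧ p y ≤ Pc κ lam ∧ dc κ lam mu ≤ r y - y * p y) ∧ mu ≤ r y := by
  have hP0 : 0 < Pc κ lam := Pc_pos hΛ
  have hδ : 0 < dc κ lam mu := dc_pos hlam hΛ hmu
  have hδmu : dc κ lam mu < mu := dc_lt_mu hΛ hmu
  have hκ0 : (0:ℝ) < κ := by linarith
  have hksub := kappa_sub_pos hκ hlam hΛ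
  have hrc : ContinuousOn r (Icc 0 b) := fun y hy => (hr y hy).continuousWithinAt
  have hpc : ContinuousOn p (Icc 0 b) := fun y hy => (hp y hy).continuousWithinAt
  have huc : ContinuousOn (fun z => r z - z * p z) (Icc 0 b) :=
    hrc.sub (continuousOn_id.mul hpc)
  -- main claim
  have main : ∀ y ∈ Icc (0:ℝ) b, 0 ≤ p y ∧ p y ≤ Pc κ lam ∧ dc κ lam mu ≤ r y - y * p y := by
    by_contra hcon
    push_neg at hcon
    obtain ⟨y₀, hy₀, hbad₀⟩ := hcon
    set B : Set ℝ := {z ∈ Icc (0:ℝ) b |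
      ¬ (0 ≤ p z ∧ p z ≤ Pc κ lam ∧ dc κ lam mu ≤ r z - z * p z)} with hBdef
    have memB : ∀ z, z ∈ Icc (0:ℝ) b →
        ¬(0 ≤ p z ∧ p z ≤ Pc κ lam ∧ dc κ lam mu ≤ r z - z * p z) → z ∈ B := by
      intro z h1 h2
      rw [hBdef]
      exact ⟨h1, h2⟩
    have hBne : B.Nonempty :=
      ⟨y₀, memB y₀ hy₀ (fun h => absurd (hbad₀ h.1 h.2.1) (not_lt.2 h.2.2))⟩
    have hBbd : BddBelow B := ⟨0, fun z hz => hz.1.1⟩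
    set t := sInf B with htdef
    have htcl : t ∈ closure B := csInf_mem_closure hBne hBbd
    have hBI : B ⊆ Icc 0 b := fun z hz => hz.1
    have htI : t ∈ Icc (0:ℝ) b := by
      have h1 : closure B ⊆ Icc (0:ℝ) b :=
        (closure_mono hBI).trans isClosed_Icc.closure_eq.subset
      exact h1 htcl
    have hle : ∀ z ∈ B, t ≤ z := fun z hz => csInf_le hBbd hz
    have hGoodlt : ∀ z ∈ Icc (0:ℝ) b, z < t →
        0 ≤ p z ∧ p z ≤ Pc κ lam ∧ dc κ lam mu ≤ r z - z * p z := by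
      intro z hz hzt
      by_contra hbad
      exact absurd (hle z (memB z hz hbad)) (not_le.2 hzt)
    have hGood0 : 0 ≤ p 0 ∧ p 0 ≤ Pc κ lam ∧ dc κ lam mu ≤ r 0 - 0 * p 0 := by
      rw [hp0, hr0]
      refine ⟨le_rfl, hP0.le, ?_⟩
      simp
      linarith
    -- left-limit lemma
    have hleft : ∀ (f : ℝ → ℝ) (c : ℝ), ContinuousOn f (Icc 0 b) →
        (∀ z ∈ Icc (0:ℝ) b, z < t → c ≤ f z) → 0 < t → c ≤ f t := by
      intro f c hf hval ht0
      have hsub : Ico (0:ℝ) t ⊆ Icc 0 b := fun z hz => ⟨hz.1, le_trans hz.2.le htI.2⟩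
      have hnb : (𝓝[Ico (0:ℝ) t] t).NeBot := by
        rw [← mem_closure_iff_nhdsWithin_neBot, closure_Ico ht0.ne]
        exact ⟨ht0.le, le_rfl⟩
      have htd : Tendsto f (𝓝[Ico (0:ℝ) t] t) (𝓝 (f t)) :=
        (hf t htI).mono hsub
      exact ge_of_tendsto htd (eventually_nhdsWithin_of_forall
        (fun z hz => hval z (hsub hz) hz.2))
    have hGoodt : 0 ≤ p t ∧ p t ≤ Pc κ lam ∧ dc κ lam mu ≤ r t - t * p t := by
      rcases eq_or_lt_of_le htI.1 with h0 | h0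
      · rw [← h0]; exact hGood0
      · refine ⟨hleft p 0 hpc (fun z hz hzt => (hGoodlt z hz hzt).1) h0, ?_, ?_⟩
        · have h := hleft (fun z => Pc κ lam - p z) 0 (continuousOn_const.sub hpc)
            (fun z hz hzt => by
              show (0:ℝ) ≤ Pc κ lam - p z
              linarith [(hGoodlt z hz hzt).2.1]) h0
          have h2 : (0:ℝ) ≤ Pc κ lam - p t := h
          linarith
        · exact hleft (fun z => r z - z * p z) (dc κ lam mu) huc
            (fun z hz hzt => (hGoodlt z hz hzt).2.2) h0
    obtain ⟨hpt0, hptP, hut⟩ := hGoodt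
    -- r ≥ mu on [0, t]
    have hrmono : ∀ z ∈ Icc (0:ℝ) t, mu ≤ r z := by
      have hsub : Icc (0:ℝ) t ⊆ Icc 0 b := Icc_subset_Icc le_rfl htI.2
      have hmono : MonotoneOn r (Icc (0:ℝ) t) := by
        apply monotoneOn_of_hasDerivWithinAt_nonneg (convex_Icc 0 t) (hrc.mono hsub)
          (f' := ρ)
        · intro x hx
          rw [interior_Icc] at hx ⊢
          exact (hr x (hsub (Ioo_subset_Icc_self hx))).mono
            ((Ioo_subset_Icc_self : Ioo (0:ℝ) t ⊆ _).trans hsub)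
        · intro x hx
          rw [interior_Icc] at hx
          have hxI : x ∈ Icc (0:ℝ) b := hsub (Ioo_subset_Icc_self hx)
          have hg := hGoodlt x hxI hx.2
          rw [hρ x hxI (by linarith [hg.1]) (by linarith [hg.2.1])]
          exact hg.1
      intro z hz
      have := hmono (left_mem_Icc.2 htI.1) hz hz.1
      rwa [hr0] at this
    have hrt : mu ≤ r t := hrmono t (right_mem_Icc.2 htI.1)
    -- decomposition of B into three pieces
    set B1 : Set ℝ := {z ∈ Icc (0:ℝ) b | p z < 0} with hB1
    set B2 : Set ℝ := {z ∈ Icc (0:ℝ) b | Pc κ lam < p z} with hB2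
    set B3 : Set ℝ := {z ∈ Icc (0:ℝ) b | r z - z * p z < dc κ lam mu} with hB3
    have memB1 : ∀ z, z ∈ Icc (0:ℝ) b → p z < 0 → z ∈ B1 := by
      intro z h1 h2; rw [hB1]; exact ⟨h1, h2⟩
    have memB2 : ∀ z, z ∈ Icc (0:ℝ) b → Pc κ lam < p z → z ∈ B2 := by
      intro z h1 h2; rw [hB2]; exact ⟨h1, h2⟩
    have memB3 : ∀ z, z ∈ Icc (0:ℝ) b → r z - z * p z < dc κ lam mu → z ∈ B3 := by
      intro z h1 h2; rw [hB3]; exact ⟨h1, h2⟩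
    have hBsub : B ⊆ B1 ∪ B2 ∪ B3 := by
      intro z hz
      obtain ⟨hzI, hzbad⟩ := hz
      by_cases h1 : 0 ≤ p z
      · by_cases h2 : p z ≤ Pc κ lam
        · by_cases h3 : dc κ lam mu ≤ r z - z * p z
          · exact absurd ⟨h1, h2, h3⟩ hzbad
          · exact Set.mem_union_right _ (memB3 z hzI (not_le.1 h3))
        · exact Set.mem_union_left _ (Set.mem_union_right _ (memB2 z hzI (not_le.1 h2)))
      · exact Set.mem_union_left _ (Set.mem_union_left _ (memB1 z hzI (not_le.1 h1)))
    have hsplit : t ∈ closure B1 ∨ t ∈ closure B2 ∨ t ∈ closure B3 := by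
      have h := (closure_mono hBsub) htcl
      rw [closure_union, closure_union] at h
      simp only [Set.mem_union] at h
      tauto
    -- generic separation contradiction
    have hsep : ∀ V : Set ℝ, V ⊆ B → t ∈ closure V →
        (∃ ε > 0, ∀ z ∈ Icc (0:ℝ) b, t ≤ z → z - t < ε → z ∉ V) → False := by
      rintro V hVB hVcl ⟨ε, hε, hout⟩
      rcases Metric.mem_closure_iff.1 hVcl ε hε with ⟨z, hzV, hdz⟩
      have hzB : V ⊆ Icc 0 b := hVB.trans hBI
      have htz : t ≤ z := hle z (hVB hzV)
      have hzt : z - t < ε := by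
        rw [Real.dist_eq, abs_of_nonpos (by linarith)] at hdz
        linarith
      exact hout z (hzB hzV) htz hzt hzV
    -- eventual-ball extraction
    have hball : ∀ S : Set ℝ, S ∈ 𝓝[Icc (0:ℝ) b] t →
        ∃ ε > 0, ∀ z ∈ Icc (0:ℝ) b, dist z t < ε → z ∈ S := by
      intro S hS
      rw [Metric.mem_nhdsWithin_iff] at hS
      obtain ⟨ε, hε, hsub⟩ := hS
      exact ⟨ε, hε, fun z hz hd => hsub ⟨Metric.mem_ball.2 hd, hz⟩⟩
    rcases hsplit with hcl | hcl | hcl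
    · -- case 1 : p < 0 nearby, but p stays ≥ 0
      refine hsep B1 (fun z hz => memB z hz.1 (fun hg => absurd hg.1 (not_le.2 hz.2))) hcl ?_
      rcases eq_or_lt_of_le hpt0 with hpeq | hplt
      · -- p t = 0 : q t > 0, p strictly increasing after t
        have hqt : 0 < q t := by
          rcases eq_or_lt_of_le htI.1 with h0 | h0
          · rw [← h0, hq0]
            exact div_pos hksub hmu
          · have heq := hode t htI h0 hpt0 hptP hut hrt
            rw [← hpeq] at heq
            have hrtpos : 0 < r t := lt_of_lt_of_le hmu hrt
            have : q t = (κ - 1/lam) / r t := by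
              rw [heq]
              field_simp
              ring_nf
              rw [mul_inv_cancel₀ hrtpos.ne']
              ring
            rw [this]
            exact div_pos hksub hrtpos
          -- find ε where q > 0
        obtain ⟨ε, hε, hqpos⟩ := hball _ ((hq t htI) (Ioi_mem_nhds hqt))
        refine ⟨ε/2, by linarith, ?_⟩
        intro z hz htz hzt hzV
        have hzpos : p z < 0 := hzV.2
        -- z > t since p t = 0
        have hztgt : t < z := by
          rcases eq_or_lt_of_le htz with h | h
          · rw [← h] at hzpos; rw [← hpeq] at hzpos; linarith
          · exact h
        -- p strictly monotone on [t, z]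
        have hc : Icc t z ⊆ Icc (0:ℝ) b := Icc_subset_Icc htI.1 hz.2
        have hmono : StrictMonoOn p (Icc t z) := by
          apply strictMonoOn_of_hasDerivWithinAt_pos (convex_Icc t z) (hpc.mono hc) (f' := q)
          · intro x hx
            rw [interior_Icc] at hx ⊢
            exact (hp x (hc (Ioo_subset_Icc_self hx))).mono
              ((Ioo_subset_Icc_self : Ioo t z ⊆ _).trans hc)
          · intro x hx
            rw [interior_Icc] at hx
            have hxI := hc (Ioo_subset_Icc_self hx)
            refine hqpos x hxI ?_
            rw [Real.dist_eq, abs_of_nonneg (by linarith [hx.1])]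
            linarith [hx.2]
        have := hmono (left_mem_Icc.2 hztgt.le) (right_mem_Icc.2 hztgt.le) hztgt
        rw [← hpeq] at this
        linarith
      · -- p t > 0 : by continuity p > 0 nearby
        obtain ⟨ε, hε, hppos⟩ := hball _ ((hpc t htI) (Ioi_mem_nhds hplt))
        refine ⟨ε, hε, ?_⟩
        intro z hz htz hzt hzV
        have : (0:ℝ) < p z := hppos z hz (by rw [Real.dist_eq, abs_of_nonneg (by linarith)]; linarith)
        exact absurd hzV.2 (not_lt.2 this.le)
    · -- case 2 : p > P nearby, but p stays ≤ P
      refine hsep B2 (fun z hz => memB z hz.1 (fun hg => absurd hg.2.1 (not_le.2 hz.2))) hcl ?_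
      rcases eq_or_lt_of_le hptP with hpeq | hplt
      · -- p t = P : q t < 0
        have ht0 : 0 < t := by
          rcases eq_or_lt_of_le htI.1 with h0 | h0
          · exfalso; rw [← h0] at hpeq; rw [hp0] at hpeq; linarith
          · exact h0
        have hqt : q t < 0 := by
          have heq := hode t htI ht0 hpt0 hptP hut hrt
          rw [hpeq] at heq
          have hPP : (1:ℝ) + Pc κ lam ^ 2 = lam * κ := by rw [Pc_sq hΛ]; ring
          have hrtpos : 0 < r t := lt_of_lt_of_le hmu hrt
          have hutpos : 0 < r t - t * Pc κ lam := by
            have := hut; rw [hpeq] at this; linarith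
          have hult : r t - t * Pc κ lam < r t := by nlinarith
          have hinv : 1 / r t < 1 / (r t - t * Pc κ lam) :=
            one_div_lt_one_div_of_lt hutpos hult
          have heq2 : q t = lam * κ * κ * (1 / r t - 1 / (r t - t * Pc κ lam)) := by
            rw [heq, hPP]
            have h1 : r t ≠ 0 := ne_of_gt hrtpos
            have h2 : r t - t * Pc κ lam ≠ 0 := ne_of_gt hutpos
            have h3 : lam ≠ 0 := ne_of_gt hlam
            field_simp
          rw [heq2]
          apply mul_neg_of_pos_of_neg (by positivity)
          linarith
        obtain ⟨ε, hε, hqneg⟩ := hball _ ((hq t htI) (Iio_mem_nhds hqt))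
        refine ⟨ε/2, by linarith, ?_⟩
        intro z hz htz hzt hzV
        have hzgt : Pc κ lam < p z := hzV.2
        have hztgt : t < z := by
          rcases eq_or_lt_of_le htz with h | h
          · exfalso; rw [← h] at hzgt; rw [hpeq] at hzgt; linarith
          · exact h
        have hc : Icc t z ⊆ Icc (0:ℝ) b := Icc_subset_Icc htI.1 hz.2
        have hmono : StrictAntiOn p (Icc t z) := by
          apply strictAntiOn_of_hasDerivWithinAt_neg (convex_Icc t z) (hpc.mono hc) (f' := q)
          · intro x hx
            rw [interior_Icc] at hx ⊢
            exact (hp x (hc (Ioo_subset_Icc_self hx))).mono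
              ((Ioo_subset_Icc_self : Ioo t z ⊆ _).trans hc)
          · intro x hx
            rw [interior_Icc] at hx
            have hxI := hc (Ioo_subset_Icc_self hx)
            refine hqneg x hxI ?_
            rw [Real.dist_eq, abs_of_nonneg (by linarith [hx.1])]
            linarith [hx.2]
        have := hmono (left_mem_Icc.2 hztgt.le) (right_mem_Icc.2 hztgt.le) hztgt
        rw [hpeq] at this
        linarith
      · obtain ⟨ε, hε, hplt'⟩ := hball _ ((hpc t htI) (Iio_mem_nhds hplt))
        refine ⟨ε, hε, ?_⟩
        intro z hz htz hzt hzV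
        have : p z < Pc κ lam := hplt' z hz (by rw [Real.dist_eq, abs_of_nonneg (by linarith)]; linarith)
        exact absurd hzV.2 (not_lt.2 this.le)
    · -- case 3 : u < δ nearby, but u stays ≥ δ
      refine hsep B3 (fun z hz => memB z hz.1 (fun hg => absurd hg.2.2 (not_le.2 hz.2))) hcl ?_
      rcases eq_or_lt_of_le hut with hueq | hult
      · -- u t = δ : then p t > 0, t > 0, q t < 0, u strictly increasing after t
        have hpt_pos : 0 < p t := by
          rcases eq_or_lt_of_le hpt0 with h | h
          · exfalso
            rw [← h] at hueq
            simp at hueq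
            -- u t = r t ≥ mu > δ
            nlinarith [hrt, hδmu]
          · exact h
        have ht0 : 0 < t := by
          rcases eq_or_lt_of_le htI.1 with h0 | h0
          · exfalso; rw [← h0] at hpt_pos; rw [hp0] at hpt_pos; linarith
          · exact h0
        have hqt : q t < 0 := by
          have heq := hode t htI ht0 hpt0 hptP hut hrt
          rw [← hueq] at heq
          have hrtpos : 0 < r t := lt_of_lt_of_le hmu hrt
          have hδlam : 0 < lam * dc κ lam mu := by positivity
          have h1 : lam * dc κ lam mu = mu / κ := by
            rw [dc]
            field_simp
          have hkey : κ / r t ≤ 1 / (lam * dc κ lam mu) := by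
            rw [h1, one_div_div]
            rw [div_eq_mul_one_div κ (r t), div_eq_mul_one_div κ mu]
            exact mul_le_mul_of_nonneg_left (one_div_le_one_div_of_le hmu hrt) hκ0.le
          have hA : 1 < 1 + p t ^ 2 := by nlinarith [hpt_pos]
          have e2 : 1 / (lam * dc κ lam mu) < (1 + p t ^ 2) / (lam * dc κ lam mu) := by
            gcongr
          have hfac : κ / r t - (1 + p t ^ 2) / (lam * dc κ lam mu) < 0 := by linarith
          rw [heq]
          exact mul_neg_of_pos_of_neg (by positivity) hfac
        have hevq : q ⁻¹' (Iio 0) ∈ 𝓝[Icc (0:ℝ) b] t := (hq t htI) (Iio_mem_nhds hqt)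
        have hevp : p ⁻¹' (Ioo (-1) (Pc κ lam + 1)) ∈ 𝓝[Icc (0:ℝ) b] t :=
          (hpc t htI) (Ioo_mem_nhds (by linarith) (by linarith))
        obtain ⟨ε, hε, hboth⟩ := hball _ (Filter.inter_mem hevq hevp)
        refine ⟨ε/2, by linarith, ?_⟩
        intro z hz htz hzt hzV
        have hzlt : r z - z * p z < dc κ lam mu := hzV.2
        have hztgt : t < z := by
          rcases eq_or_lt_of_le htz with h | h
          · exfalso; rw [← h] at hzlt; linarith [hueq.le, hueq.ge]
          · exact h
        have hc : Icc t z ⊆ Icc (0:ℝ) b := Icc_subset_Icc htI.1 hz.2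
        have hdistx : ∀ x ∈ Icc t z, dist x t < ε := by
          intro x hx
          rw [Real.dist_eq, abs_of_nonneg (by linarith [hx.1])]
          linarith [hx.2]
        have hmono : StrictMonoOn (fun w => r w - w * p w) (Icc t z) := by
          apply strictMonoOn_of_hasDerivWithinAt_pos (convex_Icc t z) (huc.mono hc)
            (f' := fun x => ρ x - (1 * p x + x * q x))
          · intro x hx
            rw [interior_Icc] at hx ⊢
            have hxI := hc (Ioo_subset_Icc_self hx)
            have hsub2 : Ioo t z ⊆ Icc (0:ℝ) b :=
              (Ioo_subset_Icc_self : Ioo t z ⊆ _).trans hc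
            exact ((hr x hxI).mono hsub2).sub
              (((hasDerivWithinAt_id x (Ioo t z)).mul ((hp x hxI).mono hsub2)))
          · intro x hx
            rw [interior_Icc] at hx
            have hxI := hc (Ioo_subset_Icc_self hx)
            have hbx := hboth x hxI (hdistx x (Ioo_subset_Icc_self hx))
            have hqx : q x < 0 := hbx.1
            have hpx : p x ∈ Ioo (-1 : ℝ) (Pc κ lam + 1) := hbx.2
            rw [hρ x hxI hpx.1.le hpx.2.le]
            have hx0 : 0 < x := lt_trans ht0 hx.1
            nlinarith [mul_neg_of_pos_of_neg hx0 hqx]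
        have := hmono (left_mem_Icc.2 hztgt.le) (right_mem_Icc.2 hztgt.le) hztgt
        simp only at this
        rw [← hueq] at this
        linarith
      · obtain ⟨ε, hε, hugt⟩ := hball _ ((huc t htI) (Ioi_mem_nhds hult))
        refine ⟨ε, hε, ?_⟩
        intro z hz htz hzt hzV
        have : dc κ lam mu < r z - z * p z := hugt z hz
          (by rw [Real.dist_eq, abs_of_nonneg (by linarith)]; linarith)
        exact absurd hzV.2 (not_lt.2 this.le)
  -- conclude with r ≥ mu everywhere
  intro y hy
  refine ⟨main y hy, ?_⟩
  have hmono : MonotoneOn r (Icc (0:ℝ) b) := by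
    apply monotoneOn_of_hasDerivWithinAt_nonneg (convex_Icc 0 b) hrc (f' := ρ)
    · intro x hx
      exact (hr x (interior_subset hx)).mono interior_subset
    · intro x hx
      have hxI := interior_subset hx
      have hg := main x hxI
      rw [hρ x hxI (by linarith [hg.1]) (by linarith [hg.2.1])]
      exact hg.1
  have := hmono (left_mem_Icc.2 (le_trans hy.1 hy.2)) hy hy.1
  rwa [hr0] at this

end more
end IMCFAux

open Set Filter Topology
set_option linter.unusedSectionVars false
set_option maxHeartbeats 1000000

namespace IMCFAux

variable {κ lam mu : ℝ}

lemma hasDerivWithinAt_fst {f : ℝ → ℝ × ℝ} {v : ℝ × ℝ} {s : Set ℝ} {x : ℝ}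
    (h : HasDerivWithinAt f v s x) : HasDerivWithinAt (fun y => (f y).1) v.1 s x :=
  (ContinuousLinearMap.fst ℝ ℝ ℝ).hasFDerivAt.comp_hasDerivWithinAt x h

lemma hasDerivWithinAt_snd {f : ℝ → ℝ × ℝ} {v : ℝ × ℝ} {s : Set ℝ} {x : ℝ}
    (h : HasDerivWithinAt f v s x) : HasDerivWithinAt (fun y => (f y).2) v.2 s x :=
  (ContinuousLinearMap.snd ℝ ℝ ℝ).hasFDerivAt.comp_hasDerivWithinAt x h

lemma hasDeriv_Ici_of_Icc {f : ℝ → ℝ × ℝ} {v : ℝ × ℝ} {b t : ℝ} (ht0 : 0 ≤ t) (htb : t < b)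
    (h : HasDerivWithinAt f v (Icc 0 b) t) : HasDerivWithinAt f v (Ici t) t := by
  refine h.mono_of_mem_nhdsWithin (mem_of_superset (Icc_mem_nhdsGE_of_mem ⟨le_rfl, htb⟩) ?_)
  exact Icc_subset_Icc ht0 le_rfl

section ex
variable (hκ : 1 ≤ κ) (hlam : 0 < lam) (hΛ : 1 < lam * κ) (hmu : 0 < mu)

include hκ hlam hΛ hmu in
lemma CC_pos : 0 < CC κ lam mu :=
  lt_of_lt_of_le (by linarith [Pc_nonneg (κ := κ) (lam := lam)]) (le_max_left _ _)

include hκ hlam hΛ hmu in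
lemma vf_lipschitzWith {b y : ℝ} (hy : y ∈ Icc 0 b) :
    LipschitzWith (max 1 (K2 κ lam mu b)).toNNReal (vf κ lam mu y) := by
  apply LipschitzWith.of_dist_le_mul
  intro x z
  have hcoe : ((max 1 (K2 κ lam mu b)).toNNReal : ℝ) = max 1 (K2 κ lam mu b) :=
    Real.coe_toNNReal _ (le_trans zero_le_one (le_max_left _ _))
  rw [hcoe]
  exact vf_lip hκ hlam hΛ hmu hy x z

include hκ hlam hΛ hmu in
lemma exists_sol {b : ℝ} (hb : 0 < b) :
    ∃ f : ℝ → ℝ × ℝ, f 0 = (mu, 0) ∧ ∀ t ∈ Icc (0:ℝ) b,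
      HasDerivWithinAt f (vf κ lam mu t (f t)) (Icc 0 b) t := by
  have hCC := CC_pos hκ hlam hΛ hmu
  have hCb : (0:ℝ) ≤ CC κ lam mu * b := by positivity
  have hPL : IsPicardLindelof (vf κ lam mu) (tmin := 0) (tmax := b)
      ⟨0, left_mem_Icc.2 hb.le⟩ ((mu, 0) : ℝ × ℝ) (CC κ lam mu * b).toNNReal 0
      (CC κ lam mu).toNNReal (max 1 (K2 κ lam mu b)).toNNReal := by
    refine ⟨?_, ?_, ?_, ?_⟩
    · intro t ht
      exact (vf_lipschitzWith hκ hlam hΛ hmu ht).lipschitzOnWith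
    · intro x _
      exact ((vf_cont hlam hΛ hmu).comp (continuous_id.prodMk continuous_const)).continuousOn
    · intro t _ x _
      rw [Real.coe_toNNReal _ hCC.le]
      exact vf_norm hκ hlam hΛ hmu t x
    · simp only [Real.coe_toNNReal _ hCC.le, Real.coe_toNNReal _ hCb, NNReal.coe_zero, sub_zero,
        sub_self, max_eq_left hb.le, le_refl]
  exact IsPicardLindelof.exists_eq_forall_mem_Icc_hasDerivWithinAt₀ hPL

include hκ hlam hΛ hmu in
lemma uniq {b : ℝ} (hb : 0 ≤ b) {f g : ℝ → ℝ × ℝ}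
    (hf : ∀ t ∈ Icc (0:ℝ) b, HasDerivWithinAt f (vf κ lam mu t (f t)) (Icc 0 b) t)
    (hg : ∀ t ∈ Icc (0:ℝ) b, HasDerivWithinAt g (vf κ lam mu t (g t)) (Icc 0 b) t)
    (h0 : f 0 = g 0) : EqOn f g (Icc 0 b) := by
  set v : ℝ → ℝ × ℝ → ℝ × ℝ := fun t x => vf κ lam mu (min (max t 0) b) x with hv
  have hmm : ∀ t : ℝ, min (max t 0) b ∈ Icc (0:ℝ) b :=
    fun t => ⟨le_min (le_max_right _ _) hb, min_le_right _ _⟩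
  have hveq : ∀ t ∈ Ico (0:ℝ) b, ∀ x, v t x = vf κ lam mu t x := by
    intro t ht x
    rw [hv]
    simp only
    rw [max_eq_left ht.1, min_eq_left ht.2.le]
  have hlipv : ∀ t, LipschitzOnWith (max 1 (K2 κ lam mu b)).toNNReal (v t)
      (univ : Set (ℝ × ℝ)) :=
    fun t => (vf_lipschitzWith hκ hlam hΛ hmu (hmm t)).lipschitzOnWith
  apply ODE_solution_unique_of_mem_Icc_right (fun t _ => hlipv t)
  · exact fun t ht => (hf t ht).continuousWithinAt
  · intro t ht
    rw [hveq t ht]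
    exact hasDeriv_Ici_of_Icc ht.1 ht.2 (hf t (Ico_subset_Icc_self ht))
  · exact fun t _ => mem_univ _
  · exact fun t ht => (hg t ht).continuousWithinAt
  · intro t ht
    rw [hveq t ht]
    exact hasDeriv_Ici_of_Icc ht.1 ht.2 (hg t (Ico_subset_Icc_self ht))
  · exact fun t _ => mem_univ _
  · exact h0

end ex
end IMCFAux

open Set Filter Topology
set_option linter.unusedSectionVars false
set_option maxHeartbeats 1000000

namespace IMCFAux

variable {κ lam mu : ℝ}

section glob
variable (hκ : 1 ≤ κ) (hlam : 0 < lam) (hΛ : 1 < lam * κ) (hmu : 0 < mu)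

include hκ hlam hΛ hmu in
lemma global_sol : ∃ g : ℝ → ℝ × ℝ,
    g 0 = (mu, 0) ∧ (∀ y ∈ Ici (0:ℝ), HasDerivWithinAt g (vf κ lam mu y (g y)) (Ici 0) y) ∧
    (∀ b : ℝ, 0 ≤ b → ∀ f : ℝ → ℝ × ℝ,
      (∀ t ∈ Icc (0:ℝ) b, HasDerivWithinAt f (vf κ lam mu t (f t)) (Icc 0 b) t) →
      f 0 = (mu, 0) → EqOn g f (Icc 0 b)) := by
  have hex : ∀ k : ℕ, ∃ f : ℝ → ℝ × ℝ, f 0 = (mu, 0) ∧ ∀ t ∈ Icc (0:ℝ) ((k:ℝ)+1),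
      HasDerivWithinAt f (vf κ lam mu t (f t)) (Icc 0 ((k:ℝ)+1)) t :=
    fun k => exists_sol hκ hlam hΛ hmu (by positivity)
  choose sol hsol0 hsolD using hex
  have hagree : ∀ j k : ℕ, j ≤ k → EqOn (sol j) (sol k) (Icc 0 ((j:ℝ)+1)) := by
    intro j k hjk
    have hsub : Icc (0:ℝ) ((j:ℝ)+1) ⊆ Icc 0 ((k:ℝ)+1) :=
      Icc_subset_Icc le_rfl (by have := (Nat.cast_le (α := ℝ)).2 hjk; linarith)
    apply uniq hκ hlam hΛ hmu (by positivity)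
    · exact fun t ht => hsolD j t ht
    · exact fun t ht => (hsolD k t (hsub ht)).mono hsub
    · rw [hsol0 j, hsol0 k]
  set g : ℝ → ℝ × ℝ := fun y => sol ⌊y⌋₊ y with hgdef
  have hgk : ∀ k : ℕ, ∀ y ∈ Icc (0:ℝ) ((k:ℝ)+1), g y = sol k y := by
    intro k y hy
    have h1 : y ∈ Icc (0:ℝ) ((⌊y⌋₊:ℝ)+1) := ⟨hy.1, (Nat.lt_floor_add_one y).le⟩
    show sol ⌊y⌋₊ y = sol k y
    calc sol ⌊y⌋₊ y = sol (max ⌊y⌋₊ k) y := hagree _ _ (le_max_left _ _) h1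
      _ = sol k y := (hagree _ _ (le_max_right _ _) hy).symm
  have hg0 : g 0 = (mu, 0) := by
    show sol ⌊(0:ℝ)⌋₊ 0 = (mu, 0)
    rw [Nat.floor_zero]
    exact hsol0 0
  have hgd : ∀ y ∈ Ici (0:ℝ), HasDerivWithinAt g (vf κ lam mu y (g y)) (Ici 0) y := by
    intro y hy
    have h1 : y ∈ Icc (0:ℝ) ((⌊y⌋₊:ℝ)+1) := ⟨hy, (Nat.lt_floor_add_one y).le⟩
    have hd := hsolD ⌊y⌋₊ y h1
    have hmem : Icc (0:ℝ) ((⌊y⌋₊:ℝ)+1) ∈ 𝓝[Ici 0] y :=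
      mem_nhdsWithin.2 ⟨Iio ((⌊y⌋₊:ℝ)+1), isOpen_Iio, Nat.lt_floor_add_one y,
        fun z hz => ⟨hz.2, hz.1.le⟩⟩
    have hd2 := hd.mono_of_mem_nhdsWithin hmem
    have hcong : g =ᶠ[𝓝[Ici (0:ℝ)] y] sol ⌊y⌋₊ := by
      filter_upwards [hmem] with z hz using hgk ⌊y⌋₊ z hz
    have hgy : g y = sol ⌊y⌋₊ y := rfl
    have hres := hd2.congr_of_eventuallyEq hcong hgy
    rwa [← hgy] at hres
  refine ⟨g, hg0, hgd, ?_⟩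
  intro b hb f hf hf0 y hy
  have hk : b ≤ ((⌈b⌉₊:ℝ)+1) := le_trans (Nat.le_ceil b) (by linarith)
  have hsub : Icc (0:ℝ) b ⊆ Icc 0 ((⌈b⌉₊:ℝ)+1) := Icc_subset_Icc le_rfl hk
  have h1 : EqOn (sol ⌈b⌉₊) f (Icc 0 b) := by
    apply uniq hκ hlam hΛ hmu hb
    · exact fun t ht => (hsolD _ t (hsub ht)).mono hsub
    · exact hf
    · rw [hsol0, hf0]
  have h2 : g y = sol ⌈b⌉₊ y := hgk _ y (hsub hy)
  rw [h2, h1 hy]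

include hκ hlam hΛ hmu in
theorem main : ∃ r : ℝ → ℝ,
    (ContDiffOn ℝ 2 r (Ici 0) ∧
     (∀ y : ℝ, 0 ≤ y → 0 < r y) ∧
     (∀ y : ℝ, 0 < y → y * derivWithin r (Ici 0) y < r y) ∧
     r 0 = mu ∧
     derivWithin r (Ici 0) 0 = 0 ∧
     derivWithin (derivWithin r (Ici 0)) (Ici 0) 0 = (κ - 1/lam) / mu ∧
     (∀ y : ℝ, 0 < y →
       derivWithin (derivWithin r (Ici 0)) (Ici 0) y / (1 + derivWithin r (Ici 0) y ^ 2) =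
       κ / r y - (1 + derivWithin r (Ici 0) y ^ 2) /
         (lam * (r y - y * derivWithin r (Ici 0) y)))) ∧
    ∀ r₂ : ℝ → ℝ,
      (ContDiffOn ℝ 2 r₂ (Ici 0) ∧
       (∀ y : ℝ, 0 ≤ y → 0 < r₂ y) ∧
       (∀ y : ℝ, 0 < y → y * derivWithin r₂ (Ici 0) y < r₂ y) ∧
       r₂ 0 = mu ∧
       derivWithin r₂ (Ici 0) 0 = 0 ∧
       derivWithin (derivWithin r₂ (Ici 0)) (Ici 0) 0 = (κ - 1/lam) / mu ∧
       (∀ y : ℝ, 0 < y →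
         derivWithin (derivWithin r₂ (Ici 0)) (Ici 0) y / (1 + derivWithin r₂ (Ici 0) y ^ 2) =
         κ / r₂ y - (1 + derivWithin r₂ (Ici 0) y ^ 2) /
           (lam * (r₂ y - y * derivWithin r₂ (Ici 0) y)))) →
      EqOn r r₂ (Ici 0) := by
  have hud : UniqueDiffOn ℝ (Ici (0:ℝ)) := uniqueDiffOn_Ici 0
  have hδ : 0 < dc κ lam mu := dc_pos hlam hΛ hmu
  obtain ⟨g, hg0, hgd, huniq⟩ := global_sol hκ hlam hΛ hmu
  set R : ℝ → ℝ := fun y => (g y).1 with hRdef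
  set Pf : ℝ → ℝ := fun y => (g y).2 with hPdef
  set Q : ℝ → ℝ := fun y => F2 κ lam mu y (R y) (Pf y) with hQdef
  have hR0 : R 0 = mu := by show (g 0).1 = mu; rw [hg0]
  have hP0 : Pf 0 = 0 := by show (g 0).2 = 0; rw [hg0]
  have hRd : ∀ y ∈ Ici (0:ℝ), HasDerivWithinAt R (cp κ lam (Pf y)) (Ici 0) y := by
    intro y hy
    have h := hasDerivWithinAt_fst (hgd y hy)
    simpa [vf] using h
  have hPd : ∀ y ∈ Ici (0:ℝ), HasDerivWithinAt Pf (Q y) (Ici 0) y := by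
    intro y hy
    have h := hasDerivWithinAt_snd (hgd y hy)
    simpa [vf] using h
  have hgc : ContinuousOn g (Ici (0:ℝ)) := fun z hz => (hgd z hz).continuousWithinAt
  have hQcont : ContinuousOn Q (Ici (0:ℝ)) := by
    have h := (vf_cont hlam hΛ hmu).comp_continuousOn
      ((continuousOn_id (s := Ici (0:ℝ))).prodMk hgc)
    exact (continuous_snd.comp_continuousOn h)
  have hQ0 : Q 0 = (κ - 1/lam) / mu := by
    show F2 κ lam mu 0 (R 0) (Pf 0) = _
    rw [hR0, hP0]
    exact F2_zero hlam hΛ hmu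
  -- the invariant bounds hold everywhere
  have hInv : ∀ y ∈ Ici (0:ℝ),
      (0 ≤ Pf y ∧ Pf y ≤ Pc κ lam ∧ dc κ lam mu ≤ R y - y * Pf y) ∧ mu ≤ R y := by
    intro y hy
    have hyb : y ∈ Icc (0:ℝ) (y+1) := ⟨hy, by linarith [mem_Ici.1 hy]⟩
    have hsub : Icc (0:ℝ) (y+1) ⊆ Ici 0 := Icc_subset_Ici_self
    refine inv_lemma hκ hlam hΛ hmu (b := y+1)
      (r := R) (p := Pf) (q := Q) (ρ := fun z => cp κ lam (Pf z))
      (fun z hz => (hRd z (hsub hz)).mono hsub)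
      (fun z hz => (hPd z (hsub hz)).mono hsub)
      (hQcont.mono hsub)
      (fun z _ h1 h2 => cp_eq h1 h2)
      hR0 hP0 hQ0 ?_ y hyb
    intro z _ _ h1 h2 h3 h4
    exact F2_eq hlam hΛ hmu h1 h2 h3 h4
  have hcpP : ∀ y ∈ Ici (0:ℝ), cp κ lam (Pf y) = Pf y := by
    intro y hy
    have h := (hInv y hy).1
    exact cp_eq (by linarith [h.1]) (by linarith [h.2.1])
  have hRd' : ∀ y ∈ Ici (0:ℝ), HasDerivWithinAt R (Pf y) (Ici 0) y := by
    intro y hy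
    have := hRd y hy
    rwa [hcpP y hy] at this
  have hRder : ∀ y ∈ Ici (0:ℝ), derivWithin R (Ici 0) y = Pf y :=
    fun y hy => (hRd' y hy).derivWithin (hud y hy)
  have hPder : ∀ y ∈ Ici (0:ℝ), derivWithin Pf (Ici 0) y = Q y :=
    fun y hy => (hPd y hy).derivWithin (hud y hy)
  have hdiffR : DifferentiableOn ℝ R (Ici 0) :=
    fun y hy => (hRd' y hy).differentiableWithinAt
  have hdiffP : DifferentiableOn ℝ Pf (Ici 0) :=
    fun y hy => (hPd y hy).differentiableWithinAt
  have hPf1 : ContDiffOn ℝ 1 Pf (Ici 0) := by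
    rw [show (1 : WithTop ℕ∞) = 0 + 1 by norm_num, contDiffOn_succ_iff_derivWithin hud]
    refine ⟨hdiffP, ?_, ?_⟩
    · intro h
      simp at h
    · rw [contDiffOn_zero]
      exact hQcont.congr hPder
  have hcd2 : ContDiffOn ℝ 2 R (Ici 0) := by
    rw [show (2 : WithTop ℕ∞) = 1 + 1 by norm_num, contDiffOn_succ_iff_derivWithin hud]
    refine ⟨hdiffR, ?_, ?_⟩
    · intro h
      simp at h
    · exact hPf1.congr hRder
  have hsecond : ∀ y ∈ Ici (0:ℝ), derivWithin (derivWithin R (Ici 0)) (Ici 0) y = Q y := by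
    intro y hy
    have h1 : derivWithin (derivWithin R (Ici 0)) (Ici 0) y = derivWithin Pf (Ici 0) y :=
      derivWithin_congr hRder (hRder y hy)
    rw [h1]
    exact hPder y hy
  -- properties bundle for R
  have hRprop : ContDiffOn ℝ 2 R (Ici 0) ∧
     (∀ y : ℝ, 0 ≤ y → 0 < R y) ∧
     (∀ y : ℝ, 0 < y → y * derivWithin R (Ici 0) y < R y) ∧
     R 0 = mu ∧
     derivWithin R (Ici 0) 0 = 0 ∧
     derivWithin (derivWithin R (Ici 0)) (Ici 0) 0 = (κ - 1/lam) / mu ∧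
     (∀ y : ℝ, 0 < y →
       derivWithin (derivWithin R (Ici 0)) (Ici 0) y / (1 + derivWithin R (Ici 0) y ^ 2) =
       κ / R y - (1 + derivWithin R (Ici 0) y ^ 2) /
         (lam * (R y - y * derivWithin R (Ici 0) y))) := by
    refine ⟨hcd2, ?_, ?_, hR0, ?_, ?_, ?_⟩
    · intro y hy
      have := (hInv y hy).2
      linarith
    · intro y hy
      have h := hInv y hy.le
      rw [hRder y hy.le]
      linarith [h.1.2.2]
    · rw [hRder 0 (mem_Ici.2 le_rfl), hP0]
    · rw [hsecond 0 (mem_Ici.2 le_rfl), hQ0]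
    · intro y hy
      have h := hInv y hy.le
      rw [hsecond y hy.le, hRder y hy.le]
      have hQy : Q y = (1 + Pf y ^ 2) * (κ / R y - (1 + Pf y ^ 2) /
          (lam * (R y - y * Pf y))) :=
        F2_eq hlam hΛ hmu h.1.1 h.1.2.1 h.1.2.2 h.2
      rw [hQy]
      have hA : (1 : ℝ) + Pf y ^ 2 ≠ 0 := by positivity
      exact mul_div_cancel_left₀ _ hA
  refine ⟨R, hRprop, ?_⟩
  -- uniqueness
  rintro r₂ ⟨hcd, hpos, hgr, hr20, hp20, hq20, hode7⟩
  set p₂ : ℝ → ℝ := derivWithin r₂ (Ici 0) with hp₂def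
  set q₂ : ℝ → ℝ := derivWithin p₂ (Ici 0) with hq₂def
  rw [show (2 : WithTop ℕ∞) = 1 + 1 by norm_num, contDiffOn_succ_iff_derivWithin hud] at hcd
  obtain ⟨hdiff₂, -, hcd1⟩ := hcd
  rw [show (1 : WithTop ℕ∞) = 0 + 1 by norm_num, contDiffOn_succ_iff_derivWithin hud] at hcd1
  obtain ⟨hdiffp₂, -, hq₂cont0⟩ := hcd1
  rw [contDiffOn_zero] at hq₂cont0
  have hr₂d : ∀ y ∈ Ici (0:ℝ), HasDerivWithinAt r₂ (p₂ y) (Ici 0) y :=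
    fun y hy => (hdiff₂ y hy).hasDerivWithinAt
  have hp₂d : ∀ y ∈ Ici (0:ℝ), HasDerivWithinAt p₂ (q₂ y) (Ici 0) y :=
    fun y hy => (hdiffp₂ y hy).hasDerivWithinAt
  have hode₂ : ∀ y : ℝ, 0 < y →
      q₂ y = (1 + p₂ y ^ 2) * (κ / r₂ y - (1 + p₂ y ^ 2) / (lam * (r₂ y - y * p₂ y))) := by
    intro y hy
    have hA : (0:ℝ) < 1 + p₂ y ^ 2 := by positivity
    have h := hode7 y hy
    rw [div_eq_iff (ne_of_gt hA)] at h
    rw [h]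
    ring
  -- invariant bounds for r₂
  have hInv₂ : ∀ y ∈ Ici (0:ℝ),
      (0 ≤ p₂ y ∧ p₂ y ≤ Pc κ lam ∧ dc κ lam mu ≤ r₂ y - y * p₂ y) ∧ mu ≤ r₂ y := by
    intro y hy
    have hyb : y ∈ Icc (0:ℝ) (y+1) := ⟨hy, by linarith [mem_Ici.1 hy]⟩
    have hsub : Icc (0:ℝ) (y+1) ⊆ Ici 0 := Icc_subset_Ici_self
    refine inv_lemma hκ hlam hΛ hmu (b := y+1)
      (r := r₂) (p := p₂) (q := q₂) (ρ := p₂)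
      (fun z hz => (hr₂d z (hsub hz)).mono hsub)
      (fun z hz => (hp₂d z (hsub hz)).mono hsub)
      (hq₂cont0.mono hsub)
      (fun z _ _ _ => rfl)
      hr20 hp20 hq20 ?_ y hyb
    intro z _ hz0 _ _ _ _
    exact hode₂ z hz0
  -- r₂ component pair solves the clamped ODE
  set g₂ : ℝ → ℝ × ℝ := fun y => (r₂ y, p₂ y) with hg₂def
  have hg₂0 : g₂ 0 = (mu, 0) := by
    show (r₂ 0, p₂ 0) = (mu, 0)
    rw [hr20, hp20]
  intro y hy
  have hyb : y ∈ Icc (0:ℝ) y := ⟨hy, le_rfl⟩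
  have hg₂d : ∀ t ∈ Icc (0:ℝ) y, HasDerivWithinAt g₂ (vf κ lam mu t (g₂ t)) (Icc 0 y) t := by
    intro t ht
    have htI : t ∈ Ici (0:ℝ) := ht.1
    have hgood := hInv₂ t htI
    have hsub : Icc (0:ℝ) y ⊆ Ici 0 := Icc_subset_Ici_self
    have hd1 : HasDerivWithinAt r₂ (p₂ t) (Icc 0 y) t := (hr₂d t htI).mono hsub
    have hd2 : HasDerivWithinAt p₂ (q₂ t) (Icc 0 y) t := (hp₂d t htI).mono hsub
    have hval : vf κ lam mu t (g₂ t) = (p₂ t, q₂ t) := by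
      have hcpt : cp κ lam (p₂ t) = p₂ t :=
        cp_eq (by linarith [hgood.1.1]) (by linarith [hgood.1.2.1])
    -- second component
      have hF : F2 κ lam mu t (r₂ t) (p₂ t) = q₂ t := by
        rcases eq_or_lt_of_le ht.1 with h0 | h0
        · rw [← h0]
          rw [hr20, hp20, F2_zero hlam hΛ hmu, hq20]
        · rw [F2_eq hlam hΛ hmu hgood.1.1 hgood.1.2.1 hgood.1.2.2 hgood.2]
          exact (hode₂ t h0).symm
      show (cp κ lam (p₂ t), F2 κ lam mu t (r₂ t) (p₂ t)) = (p₂ t, q₂ t)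
      rw [hcpt, hF]
    rw [hval]
    exact hd1.prodMk hd2
  have hEq := huniq y (mem_Ici.1 hy) g₂ hg₂d hg₂0 hyb
  have : g y = g₂ y := hEq
  show R y = r₂ y
  rw [hRdef]
  show (g y).1 = r₂ y
  rw [this]

end glob
end IMCFAux

/-- Existence and uniqueness of the solution of the inverse mean curvature
flow soliton ODE on `[0, ∞)`. -/
theorem existence_uniqueness_halfline (n : ℕ) (hn : 2 ≤ n) (lam : ℝ)
    (hlam : 1 / ((n : ℝ) - 1) < lam) (mu : ℝ) (hmu : 0 < mu) :
    ∃ r : ℝ → ℝ, IsHalfLineSolution n lam mu r ∧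
      ∀ r₂ : ℝ → ℝ, IsHalfLineSolution n lam mu r₂ →
        Set.EqOn r r₂ (Set.Ici 0) := by
  have hn2 : (2:ℝ) ≤ (n:ℝ) := by exact_mod_cast hn
  have hκ : 1 ≤ (n:ℝ) - 1 := by linarith
  have hκ0 : 0 < (n:ℝ) - 1 := by linarith
  have hlam0 : 0 < lam := lt_trans (by positivity) hlam
  have hΛ : 1 < lam * ((n:ℝ) - 1) := by
    rw [div_lt_iff₀ hκ0] at hlam
    linarith [hlam]
  obtain ⟨r, hprop, huniq⟩ := IMCFAux.main (κ := (n:ℝ) - 1) hκ hlam0 hΛ hmu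
  exact ⟨r, hprop, fun r₂ h₂ => huniq r₂ h₂⟩
end

section
/- Let n ≥ 2 be an integer, λ > 1/(n-1), μ > 0 and y₀ > 0. Suppose r : [0, y₀) → ℝ is twice continuously differentiable with r(y) > 0 and r(y) > y·r'(y) for all 0 ≤ y < y₀, r(0) = μ, r'(0) = 0, and r''(y)/(1 + r'(y)²) = (n-1)/r(y) − (1 + r'(y)²)/(λ(r(y) − y·r'(y))) holds for all 0 < y < y₀. Then r'(y) > 0 for all 0 < y < y₀. -/
open Set Filter Topology

/-- The solution of the inverse mean curvature flow soliton ODE on `[0, y₀)`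
with `λ > 1/(n-1)` is strictly increasing on `(0, y₀)`. -/
theorem deriv_pos_on_interval (n : ℕ) (hn : 2 ≤ n) (lam : ℝ)
    (hlam : 1 / ((n : ℝ) - 1) < lam)
    (mu : ℝ) (hmu : 0 < mu) (y₀ : ℝ) (hy₀ : 0 < y₀)
    (r : ℝ → ℝ) (hC : ContDiffOn ℝ 2 r (Set.Ico 0 y₀))
    (hpos : ∀ y ∈ Set.Ico (0 : ℝ) y₀, 0 < r y)
    (hstruct : ∀ y ∈ Set.Ico (0 : ℝ) y₀,
      y * derivWithin r (Set.Ico 0 y₀) y < r y)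
    (hr0 : r 0 = mu)
    (hr'0 : derivWithin r (Set.Ico 0 y₀) 0 = 0)
    (hode : ∀ y ∈ Set.Ioo (0 : ℝ) y₀,
      derivWithin (derivWithin r (Set.Ico 0 y₀)) (Set.Ico 0 y₀) y /
          (1 + (derivWithin r (Set.Ico 0 y₀) y) ^ 2) =
        ((n : ℝ) - 1) / r y -
          (1 + (derivWithin r (Set.Ico 0 y₀) y) ^ 2) /
            (lam * (r y - y * derivWithin r (Set.Ico 0 y₀) y))) :
    ∀ y ∈ Set.Ioo (0 : ℝ) y₀, 0 < derivWithin r (Set.Ico 0 y₀) y := by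
  set s := Set.Ico (0:ℝ) y₀ with hsdef
  have hsu : UniqueDiffOn ℝ s := uniqueDiffOn_Ico 0 y₀
  set u := derivWithin r s with hudef
  set u' := derivWithin u s with hu'def
  -- Basic numeric facts
  have hn1 : (1:ℝ) ≤ (n:ℝ) - 1 := by
    have : (2:ℝ) ≤ n := by exact_mod_cast hn
    linarith
  have hlam0 : 0 < lam := lt_trans (by positivity) hlam
  have hkey : 1 < lam * ((n:ℝ) - 1) := by
    rw [div_lt_iff₀ (by linarith)] at hlam
    linarith
  have hR : ∀ ρ : ℝ, 0 < ρ → 0 < ((n:ℝ)-1)/ρ - 1/(lam*ρ) := by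
    intro ρ hρ
    rw [sub_pos, div_lt_div_iff₀ (by positivity) hρ]
    nlinarith [mul_pos hρ (sub_pos.2 hkey)]
  -- Regularity
  have huC1 : ContDiffOn ℝ 1 u s := hC.derivWithin hsu (by norm_num)
  have hudiff : DifferentiableOn ℝ u s := huC1.differentiableOn one_ne_zero
  have hucont : ContinuousOn u s := huC1.continuousOn
  have hu'cont : ContinuousOn u' s := huC1.continuousOn_derivWithin hsu le_rfl
  have hrcont : ContinuousOn r s := hC.continuousOn
  have h0s : (0:ℝ) ∈ s := ⟨le_refl 0, hy₀⟩
  have hIoo_sub : Set.Ioo (0:ℝ) y₀ ⊆ s := fun y hy => ⟨le_of_lt hy.1, hy.2⟩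
  have hne : (𝓝[Set.Ioo (0:ℝ) y₀] 0).NeBot := by
    rw [nhdsWithin_Ioo_eq_nhdsGT hy₀]; infer_instance
  -- Step 1: u' 0 = (n-1)/mu - 1/(lam*mu) > 0
  have hL : Tendsto (fun y => u' y / (1 + (u y)^2)) (𝓝[Set.Ioo (0:ℝ) y₀] 0)
      (𝓝 (u' 0)) := by
    have h1 : ContinuousWithinAt u' s 0 := hu'cont 0 h0s
    have h2 : ContinuousWithinAt u s 0 := hucont 0 h0s
    have hcw : ContinuousWithinAt (fun y => u' y / (1 + (u y)^2)) s 0 :=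
      h1.div (continuousWithinAt_const.add (h2.pow 2)) (by rw [hr'0]; norm_num)
    have := hcw.tendsto.mono_left (nhdsWithin_mono 0 hIoo_sub)
    simpa [hr'0] using this
  have hRt : Tendsto (fun y => ((n:ℝ)-1)/ r y - (1 + (u y)^2)/(lam*(r y - y * u y)))
      (𝓝[Set.Ioo (0:ℝ) y₀] 0) (𝓝 (((n:ℝ)-1)/mu - 1/(lam*mu))) := by
    have h2 : ContinuousWithinAt u s 0 := hucont 0 h0s
    have h3 : ContinuousWithinAt r s 0 := hrcont 0 h0s
    have hcw : ContinuousWithinAt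
        (fun y => ((n:ℝ)-1)/ r y - (1 + (u y)^2)/(lam*(r y - y * u y))) s 0 := by
      apply ContinuousWithinAt.sub
      · exact continuousWithinAt_const.div h3 (by rw [hr0]; positivity)
      · refine ContinuousWithinAt.div
          (continuousWithinAt_const.add (h2.pow 2))
          (continuousWithinAt_const.mul (h3.sub (continuousWithinAt_id.mul h2))) ?_
        simp only [hr0, hr'0, mul_zero, sub_zero]
        positivity
    have := hcw.tendsto.mono_left (nhdsWithin_mono 0 hIoo_sub)
    simpa [hr0, hr'0] using this
  have hc : u' 0 = ((n:ℝ)-1)/mu - 1/(lam*mu) := by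
    have heq : (fun y => u' y / (1 + (u y)^2)) =ᶠ[𝓝[Set.Ioo (0:ℝ) y₀] 0]
        (fun y => ((n:ℝ)-1)/ r y - (1 + (u y)^2)/(lam*(r y - y * u y))) :=
      eventually_nhdsWithin_of_forall (fun y hy => hode y hy)
    exact tendsto_nhds_unique (hL.congr' heq) hRt
  have hc0 : 0 < u' 0 := by rw [hc]; exact hR mu hmu
  -- Step 2: u > 0 near 0
  have hu0 : HasDerivWithinAt u (u' 0) s 0 := (hudiff 0 h0s).hasDerivWithinAt
  have hslope : Tendsto (slope u 0) (𝓝[s \ {0}] 0) (𝓝 (u' 0)) :=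
    hasDerivWithinAt_iff_tendsto_slope.1 hu0
  have hev : ∀ᶠ y in 𝓝[s \ {0}] 0, 0 < slope u 0 y :=
    hslope.eventually (eventually_gt_nhds hc0)
  obtain ⟨ε, hε, hball⟩ := Metric.mem_nhdsWithin_iff.1 hev
  have hδ : ∀ y, 0 < y → y < ε → y < y₀ → 0 < u y := by
    intro y hy1 hy2 hy3
    have hyb : y ∈ Metric.ball (0:ℝ) ε ∩ (s \ {0}) := by
      refine ⟨?_, ⟨⟨le_of_lt hy1, hy3⟩, ?_⟩⟩
      · simpa [Real.dist_eq, abs_of_pos hy1] using hy2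
      · simp [ne_of_gt hy1]
    have hsl : 0 < slope u 0 y := hball hyb
    rw [slope_def_field, hr'0, sub_zero, sub_zero] at hsl
    have := mul_pos hsl hy1
    rwa [div_mul_cancel₀ _ (ne_of_gt hy1)] at this
  -- Step 3
  intro z hz
  by_contra hcon
  push_neg at hcon
  have hzε : ε ≤ z := by
    by_contra h
    push_neg at h
    exact absurd (hδ z hz.1 h hz.2) (not_lt.2 hcon)
  set B := Set.Icc ε z ∩ u ⁻¹' Set.Iic 0 with hB
  have hBsub : B ⊆ Set.Icc ε z := fun y hy => hy.1
  have hIccs : Set.Icc ε z ⊆ s :=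
    fun y hy => ⟨le_trans (le_of_lt hε) hy.1, lt_of_le_of_lt hy.2 hz.2⟩
  have hBclosed : IsClosed B :=
    (hucont.mono hIccs).preimage_isClosed_of_isClosed isClosed_Icc isClosed_Iic
  have hBne : B.Nonempty := ⟨z, ⟨hzε, le_refl z⟩, hcon⟩
  have hBcp : IsCompact B := isCompact_Icc.of_isClosed_subset hBclosed hBsub
  have hy₁B : sInf B ∈ B := hBcp.sInf_mem hBne
  set y₁ := sInf B with hy₁def
  obtain ⟨⟨hεy₁, hy₁z⟩, hy₁u⟩ := hy₁B
  have hy₁u' : u y₁ ≤ 0 := hy₁u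
  have hy₁pos : 0 < y₁ := lt_of_lt_of_le hε hεy₁
  have hy₁lt : y₁ < y₀ := lt_of_le_of_lt hy₁z hz.2
  have hy₁s : y₁ ∈ s := ⟨le_of_lt hy₁pos, hy₁lt⟩
  have hposu : ∀ y, 0 < y → y < y₁ → 0 < u y := by
    intro y hy hyy₁
    by_cases hyε : y < ε
    · exact hδ y hy hyε (lt_trans hyy₁ hy₁lt)
    · push_neg at hyε
      by_contra hle
      push_neg at hle
      have hyB : y ∈ B := ⟨⟨hyε, le_of_lt (lt_of_lt_of_le hyy₁ hy₁z)⟩, hle⟩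
      exact absurd (csInf_le hBcp.bddBelow hyB) (not_le.2 hyy₁)
  have hneb : (𝓝[Set.Ioo (0:ℝ) y₁] y₁).NeBot := by
    rw [nhdsWithin_Ioo_eq_nhdsLT hy₁pos]; infer_instance
  have hIoo1 : Set.Ioo (0:ℝ) y₁ ⊆ s := fun y hy => ⟨le_of_lt hy.1, lt_trans hy.2 hy₁lt⟩
  have huy₁0 : u y₁ = 0 := by
    have ht : Tendsto u (𝓝[Set.Ioo (0:ℝ) y₁] y₁) (𝓝 (u y₁)) :=
      (hucont y₁ hy₁s).mono_left (nhdsWithin_mono _ hIoo1)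
    have hge : 0 ≤ u y₁ :=
      ge_of_tendsto ht (eventually_nhdsWithin_of_forall
        (fun y hy => le_of_lt (hposu y hy.1 hy.2)))
    exact le_antisymm hy₁u' hge
  have hu'le : u' y₁ ≤ 0 := by
    have hd : HasDerivWithinAt u (u' y₁) s y₁ := (hudiff y₁ hy₁s).hasDerivWithinAt
    have hslope₁ : Tendsto (slope u y₁) (𝓝[s \ {y₁}] y₁) (𝓝 (u' y₁)) :=
      hasDerivWithinAt_iff_tendsto_slope.1 hd
    have hsub : Set.Ioo (0:ℝ) y₁ ⊆ s \ {y₁} :=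
      fun y hy => ⟨hIoo1 hy, ne_of_lt hy.2⟩
    have ht := hslope₁.mono_left (nhdsWithin_mono _ hsub)
    refine le_of_tendsto ht (eventually_nhdsWithin_of_forall fun y hy => ?_)
    rw [slope_def_field, huy₁0, sub_zero]
    have h1 : 0 < u y := hposu y hy.1 hy.2
    have h2 : y - y₁ < 0 := sub_neg.2 hy.2
    exact le_of_lt (div_neg_of_pos_of_neg h1 h2)
  have hode₁ := hode y₁ ⟨hy₁pos, hy₁lt⟩
  rw [huy₁0] at hode₁
  norm_num at hode₁
  have hrp : 0 < r y₁ := hpos y₁ hy₁s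
  have := hR (r y₁) hrp
  rw [one_div, mul_inv_rev] at this
  linarith
end

section
/- Let n ≥ 2 be an integer, let λ satisfy 0 < λ < 1/(n-1), and let μ > 0 and y₀ > 0. Suppose r : [0, y₀) → ℝ is twice continuously differentiable with r(y) > 0 and r(y) > y·r'(y) for all 0 ≤ y < y₀, r(0) = μ, r'(0) = 0, and r''(y)/(1 + r'(y)²) = (n-1)/r(y) − (1 + r'(y)²)/(λ(r(y) − y·r'(y))) holds for all 0 < y < y₀. Then r'(y) < 0 for all 0 < y < y₀. -/
open Set Filter Topology Metric

/-- The solution of the inverse mean curvature flow soliton ODE on `[0, y₀)`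
with `0 < λ < 1/(n-1)` is strictly decreasing on `(0, y₀)`. -/
theorem deriv_neg_on_interval (n : ℕ) (hn : 2 ≤ n) (lam : ℝ)
    (hlam0 : 0 < lam) (hlam : lam < 1 / ((n : ℝ) - 1))
    (mu : ℝ) (hmu : 0 < mu) (y₀ : ℝ) (hy₀ : 0 < y₀)
    (r : ℝ → ℝ) (hC : ContDiffOn ℝ 2 r (Set.Ico 0 y₀))
    (hpos : ∀ y ∈ Set.Ico (0 : ℝ) y₀, 0 < r y)
    (hstruct : ∀ y ∈ Set.Ico (0 : ℝ) y₀,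
      y * derivWithin r (Set.Ico 0 y₀) y < r y)
    (hr0 : r 0 = mu)
    (hr'0 : derivWithin r (Set.Ico 0 y₀) 0 = 0)
    (hode : ∀ y ∈ Set.Ioo (0 : ℝ) y₀,
      derivWithin (derivWithin r (Set.Ico 0 y₀)) (Set.Ico 0 y₀) y /
          (1 + (derivWithin r (Set.Ico 0 y₀) y) ^ 2) =
        ((n : ℝ) - 1) / r y -
          (1 + (derivWithin r (Set.Ico 0 y₀) y) ^ 2) /
            (lam * (r y - y * derivWithin r (Set.Ico 0 y₀) y))) :
    ∀ y ∈ Set.Ioo (0 : ℝ) y₀, derivWithin r (Set.Ico 0 y₀) y < 0 := by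
  have hu : UniqueDiffOn ℝ (Set.Ico (0:ℝ) y₀) := uniqueDiffOn_Ico 0 y₀
  set s : Set ℝ := Set.Ico (0:ℝ) y₀ with hsdef
  set g : ℝ → ℝ := derivWithin r s with hgdef
  set g' : ℝ → ℝ := derivWithin g s with hg'def
  have hn1 : (1:ℝ) ≤ (n:ℝ) - 1 := by
    have : (2:ℝ) ≤ (n:ℝ) := by exact_mod_cast hn
    linarith
  have hkey : ((n:ℝ) - 1) * lam < 1 := by
    have := (lt_div_iff₀ (by linarith : (0:ℝ) < (n:ℝ) - 1)).mp hlam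
    linarith
  -- the fundamental negativity lemma
  have hneg : ∀ x : ℝ, 0 < x → ((n:ℝ) - 1) / x - 1 / (lam * x) < 0 := by
    intro x hx
    have h : ((n:ℝ) - 1) / x < 1 / (lam * x) := by
      rw [div_lt_div_iff₀ hx (by positivity)]
      nlinarith
    linarith
  have hg1 : ContDiffOn ℝ 1 g s := hC.derivWithin hu (by norm_num)
  have hgc : ContinuousOn g s := hg1.continuousOn
  have hgd : DifferentiableOn ℝ g s := hg1.differentiableOn one_ne_zero
  have hg'c : ContinuousOn g' s :=
    (hg1.derivWithin hu (le_refl 1) : ContDiffOn ℝ 0 g' s).continuousOn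
  have hrc : ContinuousOn r s := hC.continuousOn
  have h0s : (0:ℝ) ∈ s := ⟨le_rfl, hy₀⟩
  have hsub : Set.Ioo (0:ℝ) y₀ ⊆ s := Set.Ioo_subset_Ico_self
  -- ODE, solved for g'
  have hode' : ∀ y ∈ Set.Ioo (0:ℝ) y₀,
      g' y = (((n:ℝ) - 1) / r y - (1 + g y ^ 2) / (lam * (r y - y * g y)))
        * (1 + g y ^ 2) := by
    intro y hy
    exact (div_eq_iff (by positivity)).mp (hode y hy)
  -- at any interior zero of g, g' is negative
  have hzero : ∀ y ∈ Set.Ioo (0:ℝ) y₀, g y = 0 → g' y < 0 := by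
    intro y hy h0
    have h := hode' y hy
    rw [h0] at h
    have hry : 0 < r y := hpos y (hsub hy)
    have h3 : (((n:ℝ) - 1) / r y - (1 + (0:ℝ) ^ 2) / (lam * (r y - y * 0)))
        * (1 + (0:ℝ) ^ 2) = ((n:ℝ) - 1) / r y - 1 / (lam * r y) := by ring
    rw [h, h3]
    exact hneg (r y) hry
  -- limit of g' at 0 and negativity of g' 0
  haveI hne0 : (𝓝[Set.Ioo (0:ℝ) y₀] (0:ℝ)).NeBot := by
    refine mem_closure_iff_nhdsWithin_neBot.mp ?_
    rw [closure_Ioo hy₀.ne]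
    exact ⟨le_rfl, hy₀.le⟩
  have hg'0 : g' 0 < 0 := by
    have ht1 : Tendsto g' (𝓝[Set.Ioo (0:ℝ) y₀] 0) (𝓝 (g' 0)) :=
      (hg'c 0 h0s).mono hsub
    have hrt : Tendsto r (𝓝[Set.Ioo (0:ℝ) y₀] 0) (𝓝 mu) := by
      have := ((hrc 0 h0s).mono hsub).tendsto
      rwa [hr0] at this
    have hgt : Tendsto g (𝓝[Set.Ioo (0:ℝ) y₀] 0) (𝓝 0) := by
      have := ((hgc 0 h0s).mono hsub).tendsto
      rwa [show g 0 = 0 from hr'0] at this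
    have hid : Tendsto (fun y : ℝ => y) (𝓝[Set.Ioo (0:ℝ) y₀] 0) (𝓝 0) :=
      tendsto_id.mono_left nhdsWithin_le_nhds
    have hnum2 : Tendsto (fun y => 1 + g y ^ 2) (𝓝[Set.Ioo (0:ℝ) y₀] 0)
        (𝓝 (1 + (0:ℝ) ^ 2)) := tendsto_const_nhds.add (hgt.pow 2)
    have hden : Tendsto (fun y => lam * (r y - y * g y)) (𝓝[Set.Ioo (0:ℝ) y₀] 0)
        (𝓝 (lam * (mu - 0 * 0))) :=
      tendsto_const_nhds.mul (hrt.sub (hid.mul hgt))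
    have hdenne : lam * (mu - 0 * 0) ≠ 0 := by
      simp only [mul_zero, sub_zero]
      positivity
    have ht2 : Tendsto (fun y =>
        (((n:ℝ) - 1) / r y - (1 + g y ^ 2) / (lam * (r y - y * g y)))
          * (1 + g y ^ 2)) (𝓝[Set.Ioo (0:ℝ) y₀] 0)
        (𝓝 ((((n:ℝ) - 1) / mu - (1 + (0:ℝ) ^ 2) / (lam * (mu - 0 * 0)))
          * (1 + (0:ℝ) ^ 2))) :=
      ((tendsto_const_nhds.div hrt hmu.ne').sub (hnum2.div hden hdenne)).mul hnum2
    have ht2' : Tendsto g' (𝓝[Set.Ioo (0:ℝ) y₀] 0)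
        (𝓝 ((((n:ℝ) - 1) / mu - (1 + (0:ℝ) ^ 2) / (lam * (mu - 0 * 0)))
          * (1 + (0:ℝ) ^ 2))) := by
      refine ht2.congr' ?_
      filter_upwards [eventually_mem_nhdsWithin] with y hy
      exact (hode' y hy).symm
    have heq := tendsto_nhds_unique ht1 ht2'
    have h3 : (((n:ℝ) - 1) / mu - (1 + (0:ℝ) ^ 2) / (lam * (mu - 0 * 0)))
        * (1 + (0:ℝ) ^ 2) = ((n:ℝ) - 1) / mu - 1 / (lam * mu) := by ring
    rw [heq, h3]
    exact hneg mu hmu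
  -- g is negative just to the right of 0
  have hev : ∀ᶠ y in 𝓝[Set.Ioo (0:ℝ) y₀] 0, g y < 0 := by
    have hder0 : HasDerivWithinAt g (g' 0) s 0 := (hgd 0 h0s).hasDerivWithinAt
    have hslope0 := hasDerivWithinAt_iff_tendsto_slope.mp hder0
    rw [show s \ {(0:ℝ)} = Set.Ioo 0 y₀ from Set.Ico_diff_left] at hslope0
    have hsl := hslope0.eventually_lt_const hg'0
    filter_upwards [hsl, eventually_mem_nhdsWithin] with y hy hymem
    have hslval : slope g 0 y = g y / y := by
      rw [slope_def_field, show g 0 = 0 from hr'0]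
      simp
    rw [hslval] at hy
    rcases div_neg_iff.mp hy with ⟨_, h2⟩ | ⟨h1, _⟩
    · linarith [hymem.1]
    · exact h1
  obtain ⟨ε, hε, hball⟩ := mem_nhdsWithin_iff.mp hev
  have hsmall : ∀ y, y ∈ Set.Ioo (0:ℝ) y₀ → y < ε → g y < 0 := by
    intro y hy hyε
    refine hball ⟨?_, hy⟩
    rw [mem_ball, Real.dist_eq, sub_zero, abs_of_pos hy.1]
    exact hyε
  -- main argument
  intro y₁ hy₁
  by_contra hcon
  push_neg at hcon
  -- the set of points in [ε', y₁] where g ≥ 0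
  set ε' : ℝ := min ε y₁ with hε'def
  have hε'pos : 0 < ε' := lt_min hε hy₁.1
  have hε'le : ε' ≤ y₁ := min_le_right _ _
  have hIccsub : Set.Icc ε' y₁ ⊆ s := fun y hy =>
    ⟨le_trans hε'pos.le hy.1, lt_of_le_of_lt hy.2 hy₁.2⟩
  set C : Set ℝ := Set.Icc ε' y₁ ∩ g ⁻¹' Set.Ici 0 with hCdef
  have hCclosed : IsClosed C :=
    (hgc.mono hIccsub).preimage_isClosed_of_isClosed isClosed_Icc isClosed_Ici
  have hy₁C : y₁ ∈ C := ⟨⟨hε'le, le_rfl⟩, hcon⟩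
  have hCbdd : BddBelow C := bddBelow_Icc.mono Set.inter_subset_left
  set yst : ℝ := sInf C with hystdef
  have hystC : yst ∈ C := hCclosed.csInf_mem ⟨y₁, hy₁C⟩ hCbdd
  have hyst0 : 0 < yst := lt_of_lt_of_le hε'pos hystC.1.1
  have hystIoo : yst ∈ Set.Ioo (0:ℝ) y₀ :=
    ⟨hyst0, lt_of_le_of_lt hystC.1.2 hy₁.2⟩
  -- g is negative on (0, yst)
  have hnegbefore : ∀ y ∈ Set.Ioo (0:ℝ) yst, g y < 0 := by
    intro y hy
    have hyIoo : y ∈ Set.Ioo (0:ℝ) y₀ := ⟨hy.1, lt_trans hy.2 hystIoo.2⟩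
    by_contra hy0
    push_neg at hy0
    rcases lt_or_ge y ε' with hyε | hyε
    · exact absurd (hsmall y hyIoo (lt_of_lt_of_le hyε (min_le_left _ _))) (not_lt.mpr hy0)
    · have hyC : y ∈ C := ⟨⟨hyε, le_trans hy.2.le hystC.1.2⟩, hy0⟩
      exact absurd (csInf_le hCbdd hyC) (not_le.mpr hy.2)
  haveI hneB : (𝓝[Set.Ioo (0:ℝ) yst] yst).NeBot := by
    refine mem_closure_iff_nhdsWithin_neBot.mp ?_
    rw [closure_Ioo hyst0.ne]
    exact ⟨hyst0.le, le_rfl⟩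
  have hIoosub : Set.Ioo (0:ℝ) yst ⊆ s := fun y hy =>
    ⟨hy.1.le, lt_trans hy.2 hystIoo.2⟩
  -- g yst = 0
  have hgyst : g yst = 0 := by
    refine le_antisymm ?_ hystC.2
    by_contra hpos'
    push_neg at hpos'
    have htg : Tendsto g (𝓝[Set.Ioo (0:ℝ) yst] yst) (𝓝 (g yst)) :=
      (hgc yst (hsub hystIoo)).mono hIoosub
    have := (htg.eventually_const_lt hpos').and eventually_mem_nhdsWithin
    obtain ⟨y, hy1, hy2⟩ := this.exists
    exact absurd (hnegbefore y hy2) (not_lt.mpr hy1.le)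
  have hg'yst : g' yst < 0 := hzero yst hystIoo hgyst
  -- the slope from the left is nonnegative, contradiction
  have hd : HasDerivWithinAt g (g' yst) (Set.Ioo (0:ℝ) yst) yst :=
    ((hgd yst (hsub hystIoo)).hasDerivWithinAt).mono hIoosub
  have hT := hasDerivWithinAt_iff_tendsto_slope.mp hd
  rw [Set.diff_singleton_eq_self (by simp)] at hT
  have h0le : 0 ≤ g' yst := by
    refine ge_of_tendsto hT ?_
    filter_upwards [eventually_mem_nhdsWithin] with y hy
    rw [slope_def_field, hgyst, sub_zero]
    exact (div_pos_of_neg_of_neg (hnegbefore y hy) (sub_neg.mpr hy.2)).le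
  linarith
end

section
/- Let n ≥ 2 be an integer, λ > 1/(n-1), μ > 0 and y₀ > 0. Suppose r : [0, y₀) → ℝ is twice continuously differentiable with r(y) > 0 and r(y) > y·r'(y) for all 0 ≤ y < y₀, r(0) = μ, r'(0) = 0, and r''(y)/(1 + r'(y)²) = (n-1)/r(y) − (1 + r'(y)²)/(λ(r(y) − y·r'(y))) holds for all 0 < y < y₀. Then there exists a constant δ₁ > 0 such that r(y) − y·r'(y) ≥ δ₁ for all 0 < y < y₀. -/
set_option maxHeartbeats 1600000 in
/-- The quantity `r(y) - y r'(y)` is uniformly bounded below by a positive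
constant for the solution of the inverse mean curvature flow soliton ODE on
`[0, y₀)` with `λ > 1/(n-1)`. -/
theorem structure_uniform_lower_bound (n : ℕ) (hn : 2 ≤ n) (lam : ℝ)
    (hlam : 1 / ((n : ℝ) - 1) < lam)
    (mu : ℝ) (hmu : 0 < mu) (y₀ : ℝ) (hy₀ : 0 < y₀)
    (r : ℝ → ℝ) (hC : ContDiffOn ℝ 2 r (Set.Ico 0 y₀))
    (hpos : ∀ y ∈ Set.Ico (0 : ℝ) y₀, 0 < r y)
    (hstruct : ∀ y ∈ Set.Ico (0 : ℝ) y₀,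
      y * derivWithin r (Set.Ico 0 y₀) y < r y)
    (hr0 : r 0 = mu)
    (hr'0 : derivWithin r (Set.Ico 0 y₀) 0 = 0)
    (hode : ∀ y ∈ Set.Ioo (0 : ℝ) y₀,
      derivWithin (derivWithin r (Set.Ico 0 y₀)) (Set.Ico 0 y₀) y /
          (1 + (derivWithin r (Set.Ico 0 y₀) y) ^ 2) =
        ((n : ℝ) - 1) / r y -
          (1 + (derivWithin r (Set.Ico 0 y₀) y) ^ 2) /
            (lam * (r y - y * derivWithin r (Set.Ico 0 y₀) y))) :
    ∃ δ₁ : ℝ, 0 < δ₁ ∧ ∀ y ∈ Set.Ioo (0 : ℝ) y₀,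
      δ₁ ≤ r y - y * derivWithin r (Set.Ico 0 y₀) y := by
  set I := Set.Ico (0:ℝ) y₀ with hIdef
  set r1 := derivWithin r I with hr1def
  set r2 := derivWithin r1 I with hr2def
  have hUD : UniqueDiffOn ℝ I := uniqueDiffOn_Ico 0 y₀
  have hn1 : (1:ℝ) ≤ (n:ℝ) - 1 := by
    have : (2:ℝ) ≤ (n:ℝ) := by exact_mod_cast hn
    linarith
  have hn1pos : (0:ℝ) < (n:ℝ) - 1 := by linarith
  have hlampos : 0 < lam := lt_trans (by positivity) hlam
  have hlamn : 1 < lam * ((n:ℝ) - 1) := by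
    rw [div_lt_iff₀ hn1pos] at hlam; linarith
  have hnhds : ∀ y ∈ Set.Ioo (0:ℝ) y₀, I ∈ nhds y := by
    intro y hy
    exact mem_nhds_iff.2 ⟨Set.Ioo 0 y₀, Set.Ioo_subset_Ico_self, isOpen_Ioo, hy⟩
  have hsub : Set.Ioo (0:ℝ) y₀ ⊆ I := Set.Ioo_subset_Ico_self
  have hr1C : ContDiffOn ℝ 1 r1 I := hC.derivWithin hUD (by norm_num)
  have hr1cont : ContinuousOn r1 I := hr1C.continuousOn
  have hr1diff : DifferentiableOn ℝ r1 I := hr1C.differentiableOn (by norm_num)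
  have hrdiff : DifferentiableOn ℝ r I := hC.differentiableOn (by norm_num)
  have hrcont : ContinuousOn r I := hC.continuousOn
  -- derivatives at interior points
  have hderiv_r : ∀ y ∈ Set.Ioo (0:ℝ) y₀, HasDerivAt r (r1 y) y := by
    intro y hy
    have h1 : DifferentiableAt ℝ r y :=
      (hrdiff y (hsub hy)).differentiableAt (hnhds y hy)
    have := h1.hasDerivAt
    rwa [hr1def, derivWithin_of_mem_nhds (hnhds y hy)]
  have hderiv_r1 : ∀ y ∈ Set.Ioo (0:ℝ) y₀, HasDerivAt r1 (r2 y) y := by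
    intro y hy
    have h1 : DifferentiableAt ℝ r1 y :=
      (hr1diff y (hsub hy)).differentiableAt (hnhds y hy)
    have := h1.hasDerivAt
    rwa [hr2def, derivWithin_of_mem_nhds (hnhds y hy)]
  -- the ODE rearranged
  have hode' : ∀ y ∈ Set.Ioo (0:ℝ) y₀,
      r2 y = (1 + (r1 y)^2) * (((n : ℝ) - 1) / r y -
          (1 + (r1 y)^2) / (lam * (r y - y * r1 y))) := by
    intro y hy
    have h := hode y hy
    have h2 : (0:ℝ) < 1 + (r1 y)^2 := by positivity
    field_simp at h ⊢
    linarith [h]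
  have hgpos : ∀ y ∈ I, 0 < r y - y * r1 y := by
    intro y hy; have := hstruct y hy; linarith
  -- Claim A: if r1 y ≤ 0 and r1 y ^ 2 < lam*(n-1) - 1 then 0 < r2 y
  have claimA : ∀ y ∈ Set.Ioo (0:ℝ) y₀, r1 y ≤ 0 → (r1 y)^2 < lam * ((n:ℝ)-1) - 1 → 0 < r2 y := by
    intro y hy h1 h2
    rw [hode' y hy]
    have hyI : y ∈ I := hsub hy
    have hr : 0 < r y := hpos y hyI
    have hg : 0 < r y - y * r1 y := hgpos y hyI
    have hrg : r y ≤ r y - y * r1 y := by nlinarith [hy.1]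
    have hp : (0:ℝ) < 1 + (r1 y)^2 := by positivity
    have key : (1 + (r1 y)^2) / (lam * (r y - y * r1 y)) < ((n : ℝ) - 1) / r y := by
      have h3 : (1 + (r1 y)^2) / (lam * (r y - y * r1 y)) ≤ (1 + (r1 y)^2) / (lam * r y) := by
        apply div_le_div_of_nonneg_left (le_of_lt hp) (by positivity)
        nlinarith
      have h4 : (1 + (r1 y)^2) / (lam * r y) < ((n : ℝ) - 1) / r y := by
        rw [div_lt_div_iff₀ (by positivity) hr]
        nlinarith
      linarith
    nlinarith
  -- Step 2 : r1 ≥ 0 on I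
  have hr1nonneg : ∀ y ∈ I, 0 ≤ r1 y := by
    by_contra hcon
    push_neg at hcon
    obtain ⟨y₂, hy₂I, hy₂neg⟩ := hcon
    have hy₂pos : 0 < y₂ := by
      rcases lt_or_eq_of_le hy₂I.1 with h | h
      · exact h
      · exfalso; rw [← h, hr'0] at hy₂neg; linarith
    set T : Set ℝ := {y ∈ Set.Icc 0 y₂ | 0 ≤ r1 y} with hTdef
    have hIccI : Set.Icc (0:ℝ) y₂ ⊆ I := Set.Icc_subset_Ico_right hy₂I.2
    have hTclosed : IsClosed T :=
      ContinuousOn.preimage_isClosed_of_isClosed (hr1cont.mono hIccI)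
        isClosed_Icc (isClosed_Ici)
    have hTne : T.Nonempty := ⟨0, ⟨le_refl 0, le_of_lt hy₂pos⟩, by rw [hr'0]⟩
    have hTbdd : BddAbove T := BddAbove.mono (fun y hy => hy.1) (bddAbove_Icc)
    set y₁ := sSup T with hy₁def
    have hy₁T : y₁ ∈ T := hTclosed.csSup_mem hTne hTbdd
    have hy₁I : y₁ ∈ I := hIccI hy₁T.1
    have hy₁le : y₁ ≤ y₂ := hy₁T.1.2
    have hy₁lt : y₁ < y₂ := lt_of_le_of_ne hy₁le (by
      intro h; rw [h] at hy₁T; exact absurd hy₁T.2 (not_le.2 hy₂neg))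
    have hy₁nonneg : 0 ≤ y₁ := hy₁T.1.1
    have hneg : ∀ y, y₁ < y → y ≤ y₂ → r1 y < 0 := by
      intro y h1 h2
      by_contra h3
      push_neg at h3
      have : y ∈ T := ⟨⟨le_trans hy₁nonneg (le_of_lt h1), h2⟩, h3⟩
      exact absurd (le_csSup hTbdd this) (not_le.2 h1)
    -- continuity of r1 at y₁ within I
    set b : ℝ := min 1 (lam * ((n:ℝ)-1) - 1) with hbdef
    have hbpos : 0 < b := lt_min one_pos (by linarith)
    have hcont : ContinuousWithinAt r1 I y₁ := hr1cont y₁ hy₁I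
    rw [Metric.continuousWithinAt_iff] at hcont
    obtain ⟨ε, hεpos, hε⟩ := hcont b hbpos
    set m := min (y₁ + ε/2) y₂ with hmdef
    have hmlt : y₁ < m := lt_min (by linarith) hy₁lt
    have hmle : m ≤ y₂ := min_le_right _ _
    have hmI : m ∈ I := hIccI ⟨le_trans hy₁nonneg (le_of_lt hmlt), hmle⟩
    have hsmall : ∀ y ∈ Set.Ioo y₁ m, |r1 y| < b := by
      intro y hy
      have hyI : y ∈ I := hIccI ⟨le_trans hy₁nonneg (le_of_lt hy.1), le_trans (le_of_lt hy.2) hmle⟩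
      have hd : dist y y₁ < ε := by
        rw [Real.dist_eq, abs_of_pos (by linarith [hy.1])]
        have := hy.2
        have := min_le_left (y₁ + ε/2) y₂
        linarith
      have := hε hyI hd
      rw [Real.dist_eq] at this
      have hr1y : r1 y < 0 := hneg y hy.1 (le_trans (le_of_lt hy.2) hmle)
      have h0 : 0 ≤ r1 y₁ := hy₁T.2
      rw [abs_of_neg hr1y]
      calc -r1 y ≤ r1 y₁ - r1 y := by linarith
        _ ≤ |r1 y - r1 y₁| := by rw [abs_sub_comm]; exact le_abs_self _
        _ < b := this
    have hIccm : Set.Icc y₁ m ⊆ I := fun x hx =>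
      ⟨le_trans hy₁nonneg hx.1, lt_of_le_of_lt hx.2 hmI.2⟩
    have hmono : StrictMonoOn r1 (Set.Icc y₁ m) := by
      apply strictMonoOn_of_deriv_pos (convex_Icc _ _) (hr1cont.mono hIccm)
      intro x hx
      rw [interior_Icc] at hx
      have hxIoo : x ∈ Set.Ioo (0:ℝ) y₀ :=
        ⟨lt_of_le_of_lt hy₁nonneg hx.1, lt_trans hx.2 hmI.2⟩
      rw [(hderiv_r1 x hxIoo).deriv]
      apply claimA x hxIoo (le_of_lt (hneg x hx.1 (le_trans (le_of_lt hx.2) hmle)))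
      have habs := hsmall x hx
      have hb1 : b ≤ 1 := min_le_left _ _
      have hb2 : b ≤ lam * ((n:ℝ)-1) - 1 := min_le_right _ _
      have := sq_abs (r1 x)
      nlinarith [abs_nonneg (r1 x)]
    have hlt := hmono (Set.left_mem_Icc.2 (le_of_lt hmlt)) (Set.right_mem_Icc.2 (le_of_lt hmlt)) hmlt
    have := hneg m hmlt hmle
    have := hy₁T.2
    linarith
  -- r is monotone, hence r ≥ mu
  have hrmu : ∀ y ∈ I, mu ≤ r y := by
    have hmono : MonotoneOn r I := by
      apply monotoneOn_of_deriv_nonneg (convex_Ico _ _) hrcont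
      · rw [interior_Ico]
        intro x hx
        exact ((hrdiff x (hsub hx)).differentiableAt (hnhds x hx)).differentiableWithinAt
      · rw [interior_Ico]
        intro x hx
        rw [(hderiv_r x hx).deriv]
        exact hr1nonneg x (hsub hx)
    intro y hy
    rw [← hr0]
    exact hmono (by constructor <;> [exact le_refl 0; exact hy₀]) hy hy.1
  -- the function g
  set g : ℝ → ℝ := fun y => r y - y * r1 y with hgdef
  have hgderiv : ∀ y ∈ Set.Ioo (0:ℝ) y₀, HasDerivAt g (-(y * r2 y)) y := by
    intro y hy
    have h1 := hderiv_r y hy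
    have h2 := ((hasDerivAt_id y).mul (hderiv_r1 y hy))
    have h3 : r1 y - (1 * r1 y + y * r2 y) = -(y * r2 y) := by ring
    rw [← h3]
    exact h1.sub h2
  have hgcont : ContinuousOn g I := by
    apply hrcont.sub
    exact (continuousOn_id).mul hr1cont
  -- Claim B
  set K : ℝ := mu / (2 * lam * ((n:ℝ) - 1)) with hKdef
  have hKpos : 0 < K := by positivity
  have hKmu : K < mu := by
    rw [hKdef, div_lt_iff₀ (by positivity)]
    nlinarith
  have claimB : ∀ y ∈ Set.Ioo (0:ℝ) y₀, r y - y * r1 y ≤ K → r2 y < 0 := by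
    intro y hy hgK
    rw [hode' y hy]
    have hyI : y ∈ I := hsub hy
    have hr : 0 < r y := hpos y hyI
    have hg : 0 < r y - y * r1 y := hgpos y hyI
    have hrm : mu ≤ r y := hrmu y hyI
    have hp : (0:ℝ) < 1 + (r1 y)^2 := by positivity
    have key : ((n : ℝ) - 1) / r y < (1 + (r1 y)^2) / (lam * (r y - y * r1 y)) := by
      have h3 : ((n:ℝ) - 1) / r y ≤ ((n:ℝ) - 1) / mu :=
        div_le_div_of_nonneg_left (by linarith) hmu hrm
      have h4 : 1 / (lam * K) ≤ (1 + (r1 y)^2) / (lam * (r y - y * r1 y)) := by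
        rw [div_le_div_iff₀ (mul_pos hlampos hKpos) (mul_pos hlampos hg)]
        nlinarith [sq_nonneg (r1 y), mul_le_mul_of_nonneg_left hgK (le_of_lt hlampos),
          mul_pos hlampos hKpos]
      have h5 : ((n:ℝ) - 1) / mu < 1 / (lam * K) := by
        have hK' : lam * K * (2*((n:ℝ)-1)) = mu := by
          rw [hKdef]; field_simp
        have ht : 0 < lam * K := by positivity
        rw [div_lt_div_iff₀ hmu (mul_pos hlampos hKpos)]
        nlinarith
      linarith
    have hneg : ((n : ℝ) - 1) / r y -
        (1 + (r1 y)^2) / (lam * (r y - y * r1 y)) < 0 := by linarith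
    exact mul_neg_of_pos_of_neg hp hneg
  -- final argument
  refine ⟨K, hKpos, ?_⟩
  by_contra hcon
  push_neg at hcon
  obtain ⟨y₂, hy₂, hy₂lt⟩ := hcon
  set T : Set ℝ := {y ∈ Set.Icc 0 y₂ | K ≤ g y} with hTdef
  have hIccI : Set.Icc (0:ℝ) y₂ ⊆ I := Set.Icc_subset_Ico_right hy₂.2
  have hTclosed : IsClosed T :=
    ContinuousOn.preimage_isClosed_of_isClosed (hgcont.mono hIccI)
      isClosed_Icc (isClosed_Ici)
  have hg0 : g 0 = mu := by simp [hgdef, hr0]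
  have hTne : T.Nonempty := ⟨0, ⟨le_refl 0, le_of_lt hy₂.1⟩, by rw [hg0]; linarith⟩
  have hTbdd : BddAbove T := BddAbove.mono (fun y hy => hy.1) (bddAbove_Icc)
  set y₁ := sSup T with hy₁def
  have hy₁T : y₁ ∈ T := hTclosed.csSup_mem hTne hTbdd
  have hy₁nonneg : 0 ≤ y₁ := hy₁T.1.1
  have hgy₂ : g y₂ = r y₂ - y₂ * r1 y₂ := rfl
  have hy₁lt : y₁ < y₂ := lt_of_le_of_ne hy₁T.1.2 (by
    intro h; rw [h] at hy₁T; have h8 := hy₁T.2; rw [hgy₂] at h8; linarith)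
  have hlt : ∀ y, y₁ < y → y ≤ y₂ → g y < K := by
    intro y h1 h2
    by_contra h3
    push_neg at h3
    have : y ∈ T := ⟨⟨le_trans hy₁nonneg (le_of_lt h1), h2⟩, h3⟩
    exact absurd (le_csSup hTbdd this) (not_le.2 h1)
  have hIccm : Set.Icc y₁ y₂ ⊆ I := fun x hx =>
    ⟨le_trans hy₁nonneg hx.1, lt_of_le_of_lt hx.2 hy₂.2⟩
  have hmono : StrictMonoOn g (Set.Icc y₁ y₂) := by
    apply strictMonoOn_of_deriv_pos (convex_Icc _ _) (hgcont.mono hIccm)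
    intro x hx
    rw [interior_Icc] at hx
    have hxIoo : x ∈ Set.Ioo (0:ℝ) y₀ :=
      ⟨lt_of_le_of_lt hy₁nonneg hx.1, lt_trans hx.2 hy₂.2⟩
    rw [(hgderiv x hxIoo).deriv]
    have hgx : g x ≤ K := le_of_lt (hlt x hx.1 (le_of_lt hx.2))
    have h2 := claimB x hxIoo hgx
    nlinarith [hxIoo.1]
  have h6 := hmono (Set.left_mem_Icc.2 (le_of_lt hy₁lt)) (Set.right_mem_Icc.2 (le_of_lt hy₁lt)) hy₁lt
  have h7 := hy₁T.2
  rw [hgy₂] at h6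
  linarith
end
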